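/- arXiv:1910.10709 — 4 statements merged into one kernel-verified Lean document; each statement's English description precedes it below -/
import Mathlib

section
/- If A is an n×n totally nonnegative matrix and B is an n×n totally positive matrix, and A is invertible, then the product AB is totally positive. -/
open Matrix Finset Equiv Equiv.Perm Function

variable {k n : ℕ}

local notation "ε " σ => ((Equiv.Perm.sign σ : ℤ) : ℝ)

instance : DecidablePred (StrictMono : (Fin k → Fin n) → Prop) :=
  fun _ => decidable_of_iff (∀ a b, a < b → _ < _) Iff.rfl

/-- The equivalence between pairs (strictly monotone map, permutation) and injective maps. -/
noncomputable def smPermEquiv (k n : ℕ) :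
    {s : Fin k → Fin n // StrictMono s} × Equiv.Perm (Fin k) ≃
      {p : Fin k → Fin n // Function.Injective p} :=
  Equiv.ofBijective
    (fun x => ⟨x.1.1 ∘ x.2, x.1.2.injective.comp x.2.injective⟩) (by
  constructor
  · rintro ⟨⟨s, hs⟩, π⟩ ⟨⟨s', hs'⟩, π'⟩ hEq
    simp only [Subtype.mk.injEq] at hEq
    have hEq' : ∀ i, s (π i) = s' (π' i) := fun i => congrFun hEq i
    -- images agree
    have him : Finset.image s Finset.univ = Finset.image s' Finset.univ := by
      ext y
      simp only [Finset.mem_image, Finset.mem_univ, true_and]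
      constructor
      · rintro ⟨x, rfl⟩
        exact ⟨π' (π.symm x), by rw [← hEq' (π.symm x)]; simp⟩
      · rintro ⟨x, rfl⟩
        exact ⟨π (π'.symm x), by rw [hEq' (π'.symm x)]; simp⟩
    have hS : (Finset.image s Finset.univ).card = k := by
      rw [Finset.card_image_of_injective _ hs.injective, Finset.card_univ, Fintype.card_fin]
    have h1 : s = fun i => (Finset.image s Finset.univ).orderEmbOfFin hS i :=
      Finset.orderEmbOfFin_unique hS (fun x => Finset.mem_image_of_mem s (Finset.mem_univ x)) hs
    have h2 : s' = fun i => (Finset.image s Finset.univ).orderEmbOfFin hS i :=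
      Finset.orderEmbOfFin_unique hS
        (fun x => him ▸ Finset.mem_image_of_mem s' (Finset.mem_univ x)) hs'
    have hss' : s = s' := h1.trans h2.symm
    subst hss'
    have : π = π' := Equiv.ext fun i => hs.injective (hEq' i)
    subst this
    rfl
  · rintro ⟨p, hp⟩
    have hS : (Finset.image p Finset.univ).card = k := by
      rw [Finset.card_image_of_injective _ hp, Finset.card_univ, Fintype.card_fin]
    set S := Finset.image p Finset.univ with hSdef
    have hg : Function.Bijective (fun i => (S.orderIsoOfFin hS).symm
        ⟨p i, by rw [hSdef]; exact Finset.mem_image_of_mem p (Finset.mem_univ i)⟩) := by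
      rw [← Finite.injective_iff_bijective]
      intro a b hab
      apply hp
      have := congrArg (S.orderIsoOfFin hS) hab
      simpa [Subtype.ext_iff] using this
    refine ⟨⟨⟨fun i => S.orderEmbOfFin hS i, (S.orderEmbOfFin hS).strictMono⟩,
      Equiv.ofBijective _ hg⟩, ?_⟩
    ext x
    simp only [Equiv.ofBijective_apply, Function.comp_apply]
    rw [← Finset.coe_orderIsoOfFin_apply, OrderIso.apply_symm_apply])

@[simp] theorem smPermEquiv_apply (x : {s : Fin k → Fin n // StrictMono s} × Equiv.Perm (Fin k)) :
    ((smPermEquiv k n x : {p : Fin k → Fin n // Function.Injective p}) : Fin k → Fin n)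
      = x.1.1 ∘ x.2 := rfl

theorem cb_aux (M : Matrix (Fin k) (Fin n) ℝ) (N : Matrix (Fin n) (Fin k) ℝ)
    {p : Fin k → Fin n} (H : ¬Function.Injective p) :
    (∑ σ : Equiv.Perm (Fin k), (ε σ) * ∏ x, M (σ x) (p x) * N (p x) x) = 0 := by
  obtain ⟨i, j, hpij, hij⟩ : ∃ i j, p i = p j ∧ i ≠ j := by
    rw [Function.Injective] at H
    push_neg at H
    obtain ⟨i, j, h1, h2⟩ := H
    exact ⟨i, j, h1, h2⟩
  exact
    Finset.sum_involution (fun σ _ => σ * Equiv.swap i j)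
      (fun σ _ => by
        have : (∏ x, M (σ x) (p x)) = ∏ x, M ((σ * Equiv.swap i j) x) (p x) :=
          Fintype.prod_equiv (Equiv.swap i j) _ _ (by simp [Equiv.apply_swap_eq_self hpij])
        simp [this, sign_swap hij, -sign_swap', Finset.prod_mul_distrib])
      (fun σ _ _ => (not_congr mul_swap_eq_iff).mpr hij) (fun _ _ => Finset.mem_univ _)
      fun σ _ => mul_swap_involutive i j σ

/-- Cauchy–Binet formula. -/
theorem cauchyBinet (M : Matrix (Fin k) (Fin n) ℝ) (N : Matrix (Fin n) (Fin k) ℝ) :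
    (M * N).det = ∑ s : {s : Fin k → Fin n // StrictMono s},
      (M.submatrix id s.1).det * (N.submatrix s.1 id).det := by
  have step1 : (M * N).det =
      ∑ p : Fin k → Fin n, ∑ σ : Equiv.Perm (Fin k),
        (ε σ) * ∏ i, M (σ i) (p i) * N (p i) i := by
    simp only [det_apply', Matrix.mul_apply, Finset.prod_univ_sum, Finset.mul_sum,
      Fintype.piFinset_univ]
    rw [Finset.sum_comm]
  have step2 : (∑ p : Fin k → Fin n, ∑ σ : Equiv.Perm (Fin k),
        (ε σ) * ∏ i, M (σ i) (p i) * N (p i) i)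
      = ∑ p : {p : Fin k → Fin n // Function.Injective p}, ∑ σ : Equiv.Perm (Fin k),
        (ε σ) * ∏ i, M (σ i) (p.1 i) * N (p.1 i) i := by
    classical
    rw [← Finset.sum_filter_add_sum_filter_not Finset.univ Function.Injective]
    rw [Finset.sum_subtype (p := Function.Injective) (Finset.univ.filter Function.Injective) (fun x => by simp) _]
    have h0 : ∑ p ∈ Finset.univ.filter (fun p => ¬ Function.Injective p),
        ∑ σ : Equiv.Perm (Fin k), (ε σ) * ∏ i, M (σ i) (p i) * N (p i) i = 0 := by
      refine Finset.sum_eq_zero fun p hp => ?_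
      exact cb_aux M N (Finset.mem_filter.mp hp).2
    rw [h0, add_zero]
  rw [step1, step2, ← Equiv.sum_comp (smPermEquiv k n)
    (fun p => ∑ σ : Equiv.Perm (Fin k), (ε σ) * ∏ i, M (σ i) (p.1 i) * N (p.1 i) i),
    Fintype.sum_prod_type]
  refine Finset.sum_congr rfl fun s _ => ?_
  have key : ∀ π : Equiv.Perm (Fin k),
      (∑ σ : Equiv.Perm (Fin k), (ε σ) * ∏ i, M (σ i) (s.1 (π i)) * N (s.1 (π i)) i)
      = (∑ τ : Equiv.Perm (Fin k), (ε τ) * ∏ i, M (τ i) (s.1 i))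
        * ((ε π) * ∏ i, N (s.1 (π i)) i) := by
    intro π
    rw [Finset.sum_mul]
    refine Fintype.sum_equiv (Equiv.mulRight π⁻¹) _ _ fun σ => ?_
    simp only [Equiv.coe_mulRight]
    have hππ : (ε π) * (ε π) = 1 := by
      rcases Int.units_eq_one_or (Equiv.Perm.sign π) with h | h <;> simp [h]
    have h2 : ((Equiv.Perm.sign (σ * π⁻¹) : ℤ) : ℝ) * (ε π) = ε σ := by
      rw [Equiv.Perm.sign_mul, Equiv.Perm.sign_inv]
      push_cast
      rw [mul_assoc, hππ, mul_one]
    have h1 : (∏ x, M ((σ * π⁻¹) x) (s.1 x)) = ∏ i, M (σ i) (s.1 (π i)) := by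
      rw [← Equiv.prod_comp π (fun x => M ((σ * π⁻¹) x) (s.1 x))]
      refine Finset.prod_congr rfl fun i _ => ?_
      simp
    rw [h1, ← h2]
    rw [Finset.prod_mul_distrib]
    ring
  calc (∑ π : Equiv.Perm (Fin k), ∑ σ : Equiv.Perm (Fin k),
          (ε σ) * ∏ i, M (σ i) ((smPermEquiv k n (s, π)).1 i)
            * N ((smPermEquiv k n (s, π)).1 i) i)
      = ∑ π : Equiv.Perm (Fin k), (∑ τ : Equiv.Perm (Fin k), (ε τ) * ∏ i, M (τ i) (s.1 i))
          * ((ε π) * ∏ i, N (s.1 (π i)) i) := by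
        refine Finset.sum_congr rfl fun π _ => ?_
        rw [← key π]
        rfl
    _ = (M.submatrix id s.1).det * (N.submatrix s.1 id).det := by
        rw [← Finset.mul_sum, det_apply', det_apply']
        simp [Matrix.submatrix_apply]

/-- A square real matrix is totally nonnegative if all its minors are nonnegative. -/
def TotallyNonneg {n : ℕ} (A : Matrix (Fin n) (Fin n) ℝ) : Prop :=
  ∀ (k : ℕ) (r c : Fin k → Fin n), StrictMono r → StrictMono c →
    0 ≤ (A.submatrix r c).det

/-- A square real matrix is totally positive if all its minors are positive. -/
def TotallyPos {n : ℕ} (A : Matrix (Fin n) (Fin n) ℝ) : Prop :=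
  ∀ (k : ℕ) (r c : Fin k → Fin n), StrictMono r → StrictMono c →
    0 < (A.submatrix r c).det

theorem stmt0 {n : ℕ} (hn : 2 ≤ n) (A B : Matrix (Fin n) (Fin n) ℝ)
    (hA : TotallyNonneg A) (hAinv : A.det ≠ 0) (hB : TotallyPos B) :
    TotallyPos (A * B) := by
  intro k r c hr hc
  have hmul : ∀ C : Matrix (Fin n) (Fin n) ℝ, ∀ d : Fin k → Fin n,
      (A * C).submatrix r d = (A.submatrix r id) * (C.submatrix id d) := by
    intro C d
    ext i j
    simp [Matrix.mul_apply]
  rw [hmul B c, cauchyBinet]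
  simp only [Matrix.submatrix_submatrix, Function.comp_id, Function.id_comp]
  apply Finset.sum_pos'
  · intro s _
    exact mul_nonneg (hA k r s.1 hr s.2) (hB k s.1 c s.2 hc).le
  · have hex : ∃ s : {s : Fin k → Fin n // StrictMono s}, 0 < (A.submatrix r s.1).det := by
      by_contra hcon
      push_neg at hcon
      have hzero : ∀ s : {s : Fin k → Fin n // StrictMono s}, (A.submatrix r s.1).det = 0 :=
        fun s => le_antisymm (hcon s) (hA k r s.1 hr s.2)
      have h1 : (A.submatrix r id) * ((A⁻¹).submatrix id r) = (1 : Matrix (Fin k) (Fin k) ℝ) := by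
        rw [← hmul A⁻¹ r, Matrix.mul_nonsing_inv A (isUnit_iff_ne_zero.mpr hAinv)]
        ext i j
        simp [Matrix.one_apply, hr.injective.eq_iff]
      have h2 := cauchyBinet (A.submatrix r id) ((A⁻¹).submatrix id r)
      rw [h1, Matrix.det_one] at h2
      simp only [Matrix.submatrix_submatrix, Function.comp_id, Function.id_comp] at h2
      have h3 : (1 : ℝ) = 0 := by
        rw [h2]
        exact Finset.sum_eq_zero fun s _ => by rw [hzero s, zero_mul]
      norm_num at h3
    obtain ⟨s, hs⟩ := hex
    exact ⟨s, Finset.mem_univ s, mul_pos hs (hB k s.1 c s.2 hc)⟩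
end

section
/- An n×n matrix A is oscillatory if and only if A is totally nonnegative, invertible, and irreducible. -/
/-- A is oscillatory if it is totally nonnegative and some positive power is totally positive. -/
def Oscillatory {n : ℕ} (A : Matrix (Fin n) (Fin n) ℝ) : Prop :=
  TotallyNonneg A ∧ ∃ k : ℕ, 0 < k ∧ TotallyPos (A ^ k)

/-- A matrix is irreducible if no simultaneous permutation of rows and columns puts it
in block upper triangular form (with a zero lower-left block of size (n-k)×k, 0<k<n). -/
def MatIrreducible {n : ℕ} (A : Matrix (Fin n) (Fin n) ℝ) : Prop :=
  ¬ ∃ (σ : Equiv.Perm (Fin n)) (k : ℕ), 0 < k ∧ k < n ∧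
      ∀ i j : Fin n, k ≤ i.val → j.val < k → A (σ i) (σ j) = 0

/-!
An oscillatory matrix is nonsingular, and it is irreducible because a zero block that a
permutation exhibits survives in every power.

Conversely, let `A` be totally nonnegative and nonsingular. Taking Schur complements of the
bottom-right entry (which preserves total nonnegativity) shows by induction that all principal
minors of `A` are positive; then a zero on the super- or subdiagonal would, through the 2×2
minors, spread to a whole off-diagonal block, contradicting irreducibility. The same Schur
complement induction, now preserving the positive bands too, shows that a minor whose column
indices arise from its row indices by raising one of them by one is positive. Finally, by
Cauchy–Binet `det A^(K+1)[r, c] ≥ det A[r, m] * det A^K[m, c]`, and `r` can be moved to `c` in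
at most `n²` such unit steps, so every minor of `A^(n²+1)` is positive.
-/

open Matrix Finset

section CauchyBinet

variable {R : Type*} [CommRing R] {m : Type*} [Fintype m] [LinearOrder m] {k : ℕ}

def injectiveEquivOrderEmbProdPerm :
    {p : Fin k → m // Function.Injective p} ≃ (Fin k ↪o m) × Equiv.Perm (Fin k) where
  toFun p := (OrderEmbedding.ofStrictMono (p.1 ∘ Tuple.sort p.1)
      ((Tuple.monotone_sort p.1).strictMono_of_injective (p.2.comp (Tuple.sort p.1).injective)),
    (Tuple.sort p.1)⁻¹)
  invFun q := ⟨q.1 ∘ q.2, q.1.injective.comp q.2.injective⟩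
  left_inv p := by ext i; simp
  right_inv := by
    rintro ⟨f, σ⟩
    have hsort : Tuple.sort (f ∘ σ) = σ⁻¹ := by
      refine (Tuple.eq_sort_iff.2 ⟨?_, fun i j hij h => ?_⟩).symm
      · simpa [Function.comp_def] using f.monotone
      · exact absurd (f.injective (by simpa using h)) (by simpa using hij.ne)
    ext <;> simp [hsort]

/-- The Cauchy–Binet formula. -/
theorem det_mul_eq_sum_orderEmb (M : Matrix (Fin k) m R) (N : Matrix m (Fin k) R) :
    (M * N).det = ∑ f : Fin k ↪o m, (M.submatrix id f).det * (N.submatrix f id).det := by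
  classical
  have expand : (M * N).det = ∑ p : Fin k → m, (∏ i, N (p i) i) * (M.submatrix id p).det := by
    simp only [det_apply', mul_apply, prod_univ_sum, mul_sum, Fintype.piFinset_univ,
      submatrix_apply, id]
    rw [Finset.sum_comm]
    refine sum_congr rfl fun p _ => sum_congr rfl fun σ _ => ?_
    rw [prod_mul_distrib]
    ring
  have vanish : ∀ p : Fin k → m, ¬ Function.Injective p → (M.submatrix id p).det = 0 := by
    intro p hp
    obtain ⟨i, j, hpij, hij⟩ := Function.not_injective_iff.1 hp
    exact det_zero_of_column_eq hij fun r => by simp [hpij]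
  have injective_only : ∑ p : Fin k → m, (∏ i, N (p i) i) * (M.submatrix id p).det
      = ∑ p : {p : Fin k → m // Function.Injective p},
          (∏ i, N (p.1 i) i) * (M.submatrix id p.1).det := by
    rw [← sum_filter_of_ne (p := Function.Injective) fun p _ h =>
        not_not.1 fun hp => h (by rw [vanish p hp, mul_zero]),
      sum_subtype _ (p := Function.Injective) fun p => by simp]
  rw [expand, injective_only, ← injectiveEquivOrderEmbProdPerm.symm.sum_comp,
    Fintype.sum_prod_type]
  refine sum_congr rfl fun f _ => ?_
  simp only [injectiveEquivOrderEmbProdPerm, Equiv.coe_fn_symm_mk, Function.comp_apply]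
  rw [det_apply' (N.submatrix f id), mul_sum]
  refine sum_congr rfl fun σ _ => ?_
  rw [show M.submatrix id (f ∘ σ) = (M.submatrix id f).submatrix id σ from rfl, det_permute']
  simp only [submatrix_apply, id]
  ring

theorem det_submatrix_mul_eq_sum {l o : Type*} (A : Matrix l m R) (B : Matrix m o R)
    (r : Fin k → l) (c : Fin k → o) :
    ((A * B).submatrix r c).det
      = ∑ f : Fin k ↪o m, (A.submatrix r f).det * (B.submatrix f c).det := by
  rw [submatrix_mul _ _ r id c Function.bijective_id, det_mul_eq_sum_orderEmb]
  rfl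

end CauchyBinet

section Tuples

variable {k n : ℕ}

lemma strictMono_vecCons_pair {α : Type*} [Preorder α] {a b : α} (h : a < b) :
    StrictMono ![a, b] :=
  Fin.strictMono_iff_lt_succ.2 fun i => by fin_cases i; simpa using h

lemma strictMono_rev_comp_rev {r : Fin k → Fin n} (hr : StrictMono r) :
    StrictMono (Fin.rev ∘ r ∘ Fin.rev) :=
  fun _ _ h => Fin.rev_lt_rev.2 (hr (Fin.rev_lt_rev.2 h))

lemma strictMono_snoc_castSucc_last {u : Fin k → Fin n} (hu : StrictMono u) :
    StrictMono (Fin.snoc (Fin.castSucc ∘ u) (Fin.last n) : Fin (k + 1) → Fin (n + 1)) := by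
  intro a b hab
  induction b using Fin.lastCases with
  | last =>
    obtain ⟨a, rfl⟩ := Fin.exists_castSucc_eq.2 hab.ne
    simp
  | cast b =>
    obtain ⟨a, rfl⟩ := Fin.exists_castSucc_eq.2 (hab.trans (Fin.castSucc_lt_last b)).ne
    simpa using hu (Fin.castSucc_lt_castSucc_iff.1 hab)

lemma StrictMono.exists_eq_snoc_castSucc_last {r : Fin (k + 1) → Fin (n + 1)} (hr : StrictMono r)
    (hlast : r (Fin.last k) = Fin.last n) :
    ∃ u : Fin k → Fin n, StrictMono u ∧ r = Fin.snoc (Fin.castSucc ∘ u) (Fin.last n) := by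
  have hne : ∀ i : Fin k, r i.castSucc ≠ Fin.last n := fun i =>
    hlast ▸ (hr (Fin.castSucc_lt_last i)).ne
  refine ⟨fun i => (r i.castSucc).castPred (hne i), fun i j hij => ?_, funext fun i => ?_⟩
  · exact Fin.castPred_lt_castPred_iff.2 (hr (Fin.castSucc_lt_castSucc_iff.2 hij))
  · induction i using Fin.lastCases with
    | last => simpa using hlast
    | cast i => simp

lemma StrictMono.exists_eq_castSucc_comp {r : Fin (k + 1) → Fin (n + 1)} (hr : StrictMono r)
    (hlast : r (Fin.last k) ≠ Fin.last n) :
    ∃ u : Fin (k + 1) → Fin n, StrictMono u ∧ r = Fin.castSucc ∘ u := by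
  have hne : ∀ i, r i ≠ Fin.last n := fun i h =>
    hlast (le_antisymm (Fin.le_last _) (h ▸ hr.monotone (Fin.le_last i)))
  exact ⟨fun i => (r i).castPred (hne i), fun i j hij => Fin.castPred_lt_castPred_iff.2 (hr hij),
    funext fun i => by simp⟩

end Tuples

section Reversal

variable {R : Type*} [CommRing R] {k n : ℕ}

lemma det_submatrix_rev (A : Matrix (Fin n) (Fin n) R) :
    (A.submatrix Fin.rev Fin.rev).det = A.det :=
  det_submatrix_equiv_self Fin.revPerm A

lemma det_submatrix_rev_submatrix (A : Matrix (Fin n) (Fin n) R) (r c : Fin k → Fin n) :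
    ((A.submatrix Fin.rev Fin.rev).submatrix r c).det
      = (A.submatrix (Fin.rev ∘ r ∘ Fin.rev) (Fin.rev ∘ c ∘ Fin.rev)).det := by
  rw [← det_submatrix_equiv_self Fin.revPerm]
  congr 1

lemma det_transpose_submatrix_rev_submatrix (A : Matrix (Fin n) (Fin n) R)
    (r c : Fin k → Fin n) :
    ((A.submatrix Fin.rev Fin.rev)ᵀ.submatrix (Fin.rev ∘ c ∘ Fin.rev)
      (Fin.rev ∘ r ∘ Fin.rev)).det = (A.submatrix r c).det := by
  rw [← transpose_submatrix, det_transpose, det_submatrix_rev_submatrix]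
  simp [Function.comp_def]

end Reversal

section TotallyNonneg

variable {n : ℕ} {A B : Matrix (Fin n) (Fin n) ℝ}

lemma TotallyNonneg.entry_nonneg (hA : TotallyNonneg A) (i j : Fin n) : 0 ≤ A i j := by
  have h := hA 1 ![i] ![j] (Subsingleton.strictMono _) (Subsingleton.strictMono _)
  rwa [det_fin_one] at h

lemma TotallyPos.entry_pos (hA : TotallyPos A) (i j : Fin n) : 0 < A i j := by
  have h := hA 1 ![i] ![j] (Subsingleton.strictMono _) (Subsingleton.strictMono _)
  rwa [det_fin_one] at h

lemma TotallyNonneg.mul_sub_mul_nonneg (hA : TotallyNonneg A) {p p' q q' : Fin n}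
    (hp : p < p') (hq : q < q') : 0 ≤ A p q * A p' q' - A p q' * A p' q := by
  have h := hA 2 ![p, p'] ![q, q'] (strictMono_vecCons_pair hp) (strictMono_vecCons_pair hq)
  rwa [det_fin_two] at h

lemma TotallyNonneg.det_nonneg (hA : TotallyNonneg A) : 0 ≤ A.det := by
  simpa using hA n id id strictMono_id strictMono_id

lemma TotallyNonneg.transpose (hA : TotallyNonneg A) : TotallyNonneg Aᵀ := fun k r c hr hc => by
  rw [← transpose_submatrix, det_transpose]
  exact hA k c r hc hr

lemma TotallyNonneg.submatrix {m : ℕ} (hA : TotallyNonneg A) {r c : Fin m → Fin n}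
    (hr : StrictMono r) (hc : StrictMono c) : TotallyNonneg (A.submatrix r c) :=
  fun k _ _ hr' hc' => hA k _ _ (hr.comp hr') (hc.comp hc')

lemma TotallyNonneg.submatrix_rev (hA : TotallyNonneg A) :
    TotallyNonneg (A.submatrix Fin.rev Fin.rev) := fun k r c hr hc => by
  rw [det_submatrix_rev_submatrix]
  exact hA k _ _ (strictMono_rev_comp_rev hr) (strictMono_rev_comp_rev hc)

lemma TotallyNonneg.mul (hA : TotallyNonneg A) (hB : TotallyNonneg B) :
    TotallyNonneg (A * B) := fun k r c hr hc => by
  rw [det_submatrix_mul_eq_sum]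
  exact sum_nonneg fun f _ => mul_nonneg (hA k r f hr f.strictMono) (hB k f c f.strictMono hc)

lemma TotallyNonneg.pow_succ (hA : TotallyNonneg A) (m : ℕ) : TotallyNonneg (A ^ (m + 1)) := by
  induction m with
  | zero => simpa using hA
  | succ m ih =>
    rw [_root_.pow_succ]
    exact ih.mul hA

lemma TotallyNonneg.det_submatrix_mul_det_submatrix_le (hA : TotallyNonneg A)
    (hB : TotallyNonneg B) {k : ℕ} {r s c : Fin k → Fin n} (hr : StrictMono r)
    (hs : StrictMono s) (hc : StrictMono c) :
    (A.submatrix r s).det * (B.submatrix s c).det ≤ ((A * B).submatrix r c).det := by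
  rw [det_submatrix_mul_eq_sum]
  exact single_le_sum
    (f := fun f : Fin k ↪o Fin n => (A.submatrix r f).det * (B.submatrix f c).det)
    (fun f _ => mul_nonneg (hA k r f hr f.strictMono) (hB k f c f.strictMono hc))
    (mem_univ (OrderEmbedding.ofStrictMono s hs))

end TotallyNonneg

section SchurComplement

variable {K : Type*} [Field K] {n : ℕ}

def schurLast (A : Matrix (Fin (n + 1)) (Fin (n + 1)) K) : Matrix (Fin n) (Fin n) K :=
  of fun i j => A i.castSucc j.castSucc
    - A i.castSucc (Fin.last n) * A (Fin.last n) j.castSucc / A (Fin.last n) (Fin.last n)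

lemma schurLast_transpose (A : Matrix (Fin (n + 1)) (Fin (n + 1)) K) :
    schurLast Aᵀ = (schurLast A)ᵀ := by
  ext i j
  simp only [schurLast, transpose_apply, of_apply]
  ring

lemma schurLast_submatrix {k : ℕ} (A : Matrix (Fin (n + 1)) (Fin (n + 1)) K)
    (u v : Fin k → Fin n) :
    schurLast (A.submatrix (Fin.snoc (Fin.castSucc ∘ u) (Fin.last n))
      (Fin.snoc (Fin.castSucc ∘ v) (Fin.last n))) = (schurLast A).submatrix u v := by
  ext i j
  simp [schurLast]

lemma det_eq_mul_det_schurLast (A : Matrix (Fin (n + 1)) (Fin (n + 1)) K)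
    (hd : A (Fin.last n) (Fin.last n) ≠ 0) :
    A.det = A (Fin.last n) (Fin.last n) * (schurLast A).det := by
  set c : Fin (n + 1) → K := fun i =>
    if i = Fin.last n then 0 else A i (Fin.last n) / A (Fin.last n) (Fin.last n)
  set B : Matrix (Fin (n + 1)) (Fin (n + 1)) K := of fun i j => A i j - c i * A (Fin.last n) j
  -- Row-reduce the last column above the pivot, then expand along it.
  have hAB : A.det = B.det :=
    det_eq_of_forall_row_eq_smul_add_const c (Fin.last n) (by simp [c]) fun i j => by simp [B, c]
  have hcol : ∀ i, i ≠ Fin.last n → B i (Fin.last n) = 0 := fun i hi => by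
    simp [B, c, hi, div_mul_cancel₀ _ hd]
  rw [hAB, det_succ_column B (Fin.last n), Fintype.sum_eq_single (Fin.last n)
    fun i hi => by rw [hcol i hi, mul_zero, zero_mul]]
  have hS : B.submatrix (Fin.last n).succAbove (Fin.last n).succAbove = schurLast A := by
    ext i j
    simp [B, c, schurLast, Fin.succAbove_last, Fin.castSucc_ne_last]
    ring
  rw [hS]
  simp [B, c, ← two_mul, pow_mul]

lemma det_submatrix_snoc_castSucc_last (A : Matrix (Fin (n + 1)) (Fin (n + 1)) K)
    (hd : A (Fin.last n) (Fin.last n) ≠ 0) {k : ℕ} (u v : Fin k → Fin n) :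
    (A.submatrix (Fin.snoc (Fin.castSucc ∘ u) (Fin.last n))
      (Fin.snoc (Fin.castSucc ∘ v) (Fin.last n))).det
      = A (Fin.last n) (Fin.last n) * ((schurLast A).submatrix u v).det := by
  rw [det_eq_mul_det_schurLast _ (by simpa using hd), schurLast_submatrix]
  simp

end SchurComplement

section PrincipalMinors

variable {n : ℕ}

lemma TotallyNonneg.schurLast {A : Matrix (Fin (n + 1)) (Fin (n + 1)) ℝ} (hA : TotallyNonneg A)
    (hd : 0 < A (Fin.last n) (Fin.last n)) : TotallyNonneg (schurLast A) := fun k u v hu hv => by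
  have h := hA (k + 1) _ _ (strictMono_snoc_castSucc_last hu) (strictMono_snoc_castSucc_last hv)
  rw [det_submatrix_snoc_castSucc_last A hd.ne'] at h
  exact (mul_nonneg_iff_of_pos_left hd).1 h

lemma det_schurLast_pos {A : Matrix (Fin (n + 1)) (Fin (n + 1)) ℝ} (hdet : 0 < A.det)
    (hd : 0 < A (Fin.last n) (Fin.last n)) : 0 < (schurLast A).det := by
  rw [det_eq_mul_det_schurLast A hd.ne'] at hdet
  exact (mul_pos_iff_of_pos_left hd).1 hdet

lemma TotallyNonneg.last_last_pos {A : Matrix (Fin (n + 1)) (Fin (n + 1)) ℝ}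
    (hA : TotallyNonneg A) (hdet : A.det ≠ 0) : 0 < A (Fin.last n) (Fin.last n) := by
  refine (hA.entry_nonneg _ _).lt_of_ne fun h0 => hdet ?_
  -- The 2×2 minors through a zero corner force the last row or the last column to vanish.
  have hprod : ∀ p q, A p (Fin.last n) * A (Fin.last n) q = 0 := by
    intro p q
    rcases (Fin.le_last p).lt_or_eq with hp | rfl
    · rcases (Fin.le_last q).lt_or_eq with hq | rfl
      · have h := hA.mul_sub_mul_nonneg hp hq
        rw [← h0] at h
        nlinarith [mul_nonneg (hA.entry_nonneg p (Fin.last n)) (hA.entry_nonneg (Fin.last n) q)]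
      · rw [← h0, mul_zero]
    · rw [← h0, zero_mul]
  by_cases hcol : ∀ p, A p (Fin.last n) = 0
  · exact det_eq_zero_of_column_eq_zero _ hcol
  · obtain ⟨p, hp⟩ := not_forall.1 hcol
    exact det_eq_zero_of_row_eq_zero (Fin.last n) fun q =>
      (mul_eq_zero.1 (hprod p q)).resolve_left hp

lemma TotallyNonneg.det_submatrix_snoc_castSucc_last_pos
    {A : Matrix (Fin (n + 1)) (Fin (n + 1)) ℝ}
    (ih : ∀ B : Matrix (Fin n) (Fin n) ℝ, TotallyNonneg B → 0 < B.det →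
      ∀ {k} {u : Fin k → Fin n}, StrictMono u → 0 < (B.submatrix u u).det)
    (hA : TotallyNonneg A) (hdet : 0 < A.det) {k : ℕ} {u : Fin k → Fin n} (hu : StrictMono u) :
    0 < (A.submatrix (Fin.snoc (Fin.castSucc ∘ u) (Fin.last n))
      (Fin.snoc (Fin.castSucc ∘ u) (Fin.last n))).det := by
  have hd := hA.last_last_pos hdet.ne'
  rw [det_submatrix_snoc_castSucc_last A hd.ne']
  exact mul_pos hd (ih _ (hA.schurLast hd) (det_schurLast_pos hdet hd) hu)

/-- Reversing the order of the indices turns the leading principal minor into a trailing one,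
which contains the last index. -/
lemma TotallyNonneg.det_submatrix_castSucc_pos {A : Matrix (Fin (n + 1)) (Fin (n + 1)) ℝ}
    (ih : ∀ B : Matrix (Fin n) (Fin n) ℝ, TotallyNonneg B → 0 < B.det →
      ∀ {k} {u : Fin k → Fin n}, StrictMono u → 0 < (B.submatrix u u).det)
    (hA : TotallyNonneg A) (hdet : 0 < A.det) :
    0 < (A.submatrix Fin.castSucc Fin.castSucc).det := by
  cases n with
  | zero => simp
  | succ n =>
    have hsucc : (Fin.snoc (Fin.castSucc ∘ Fin.succ) (Fin.last (n + 1)) : Fin (n + 1) → _)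
        = Fin.succ := funext fun i => by
      induction i using Fin.lastCases with
      | last => simp
      | cast i => simp
    have h := hA.submatrix_rev.det_submatrix_snoc_castSucc_last_pos ih
      (by rwa [det_submatrix_rev]) (Fin.strictMono_succ (n := n))
    rwa [hsucc, det_submatrix_rev_submatrix,
      show Fin.rev ∘ Fin.succ ∘ Fin.rev = (Fin.castSucc : Fin (n + 1) → _) from
        funext fun i => by simp [Fin.rev_succ]] at h

theorem TotallyNonneg.det_submatrix_self_pos : ∀ {n : ℕ} {A : Matrix (Fin n) (Fin n) ℝ},
    TotallyNonneg A → 0 < A.det → ∀ {k : ℕ} {r : Fin k → Fin n}, StrictMono r →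
      0 < (A.submatrix r r).det
  | _, _, _, _, 0, _, _ => by simp
  | 0, _, _, _, _ + 1, r, _ => (r 0).elim0
  | n + 1, A, hA, hdet, k + 1, r, hr => by
    have ih := fun (B : Matrix (Fin n) (Fin n) ℝ) hB hBdet => @det_submatrix_self_pos n B hB hBdet
    by_cases hlast : r (Fin.last k) = Fin.last n
    · obtain ⟨u, hu, rfl⟩ := hr.exists_eq_snoc_castSucc_last hlast
      exact hA.det_submatrix_snoc_castSucc_last_pos ih hdet hu
    · obtain ⟨u, hu, rfl⟩ := hr.exists_eq_castSucc_comp hlast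
      exact ih _ (hA.submatrix Fin.strictMono_castSucc Fin.strictMono_castSucc)
        (hA.det_submatrix_castSucc_pos ih hdet) hu

lemma TotallyNonneg.diag_pos {A : Matrix (Fin n) (Fin n) ℝ} (hA : TotallyNonneg A)
    (hdet : 0 < A.det) (i : Fin n) : 0 < A i i := by
  have h := hA.det_submatrix_self_pos hdet (Subsingleton.strictMono ![i])
  rwa [det_fin_one] at h

lemma TotallyNonneg.mul_sub_mul_pos {A : Matrix (Fin n) (Fin n) ℝ} (hA : TotallyNonneg A)
    (hdet : 0 < A.det) {i j : Fin n} (hij : i < j) : 0 < A i i * A j j - A i j * A j i := by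
  have h := hA.det_submatrix_self_pos hdet (strictMono_vecCons_pair hij)
  rwa [det_fin_two] at h

end PrincipalMinors

section GKMatrix

variable {n : ℕ}

/-- The hypotheses of the Gantmacher–Krein criterion for oscillatory matrices. -/
structure IsGKMatrix (A : Matrix (Fin n) (Fin n) ℝ) : Prop where
  totallyNonneg : TotallyNonneg A
  det_pos : 0 < A.det
  superdiag_pos : ∀ i j : Fin n, (i : ℕ) + 1 = j → 0 < A i j
  subdiag_pos : ∀ i j : Fin n, (i : ℕ) + 1 = j → 0 < A j i

namespace IsGKMatrix

lemma transpose {A : Matrix (Fin n) (Fin n) ℝ} (hA : IsGKMatrix A) : IsGKMatrix Aᵀ where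
  totallyNonneg := hA.totallyNonneg.transpose
  det_pos := by rw [det_transpose]; exact hA.det_pos
  superdiag_pos := hA.subdiag_pos
  subdiag_pos := hA.superdiag_pos

lemma submatrix_rev {A : Matrix (Fin n) (Fin n) ℝ} (hA : IsGKMatrix A) :
    IsGKMatrix (A.submatrix Fin.rev Fin.rev) where
  totallyNonneg := hA.totallyNonneg.submatrix_rev
  det_pos := by rw [det_submatrix_rev]; exact hA.det_pos
  superdiag_pos i j h := hA.subdiag_pos j.rev i.rev (by simp only [Fin.val_rev]; omega)
  subdiag_pos i j h := hA.superdiag_pos j.rev i.rev (by simp only [Fin.val_rev]; omega)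

lemma submatrix_castSucc {A : Matrix (Fin (n + 1)) (Fin (n + 1)) ℝ} (hA : IsGKMatrix A) :
    IsGKMatrix (A.submatrix Fin.castSucc Fin.castSucc) where
  totallyNonneg := hA.totallyNonneg.submatrix Fin.strictMono_castSucc Fin.strictMono_castSucc
  det_pos := hA.totallyNonneg.det_submatrix_self_pos hA.det_pos Fin.strictMono_castSucc
  superdiag_pos _ _ h := hA.superdiag_pos _ _ h
  subdiag_pos _ _ h := hA.subdiag_pos _ _ h

end IsGKMatrix

lemma TotallyNonneg.mul_sub_mul_pos_of_lt {A : Matrix (Fin n) (Fin n) ℝ}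
    (hA : TotallyNonneg A) {p s p' q q' : Fin n} (hps : p < s) (hq : q < q')
    (hpq : 0 < A p q) (hs : 0 < A s q * A p' q' - A s q' * A p' q) :
    0 < A p q * A p' q' - A p q' * A p' q := by
  have hX := hA.mul_sub_mul_nonneg hps hq
  have he := hA.entry_nonneg p' q
  have hc := hA.entry_nonneg s q
  -- a Plücker relation between the minors on rows `p, s, p'`
  have plucker : A s q * (A p q * A p' q' - A p q' * A p' q)
      = A p' q * (A p q * A s q' - A p q' * A s q)
        + A p q * (A s q * A p' q' - A s q' * A p' q) := by
    ring
  by_contra! hneg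
  nlinarith [plucker, mul_nonneg he hX, mul_pos hpq hs, mul_nonneg hc (neg_nonneg.2 hneg)]

lemma IsGKMatrix.schurLast_superdiag_pos {A : Matrix (Fin (n + 1)) (Fin (n + 1)) ℝ}
    (hA : IsGKMatrix A) (i j : Fin n) (hij : (i : ℕ) + 1 = j) : 0 < schurLast A i j := by
  have hd := hA.totallyNonneg.diag_pos hA.det_pos (Fin.last n)
  have hlt : ∀ x : Fin n, x.castSucc < Fin.last n := Fin.castSucc_lt_last
  have hminor := hA.totallyNonneg.mul_sub_mul_pos_of_lt
    (Fin.castSucc_lt_castSucc_iff.2 (Fin.lt_def.2 (by omega : (i : ℕ) < j))) (hlt j)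
    (hA.superdiag_pos _ _ hij) (hA.totallyNonneg.mul_sub_mul_pos hA.det_pos (hlt j))
  rw [schurLast, of_apply, sub_pos, div_lt_iff₀ hd]
  linarith

lemma IsGKMatrix.schurLast {A : Matrix (Fin (n + 1)) (Fin (n + 1)) ℝ} (hA : IsGKMatrix A) :
    IsGKMatrix (schurLast A) where
  totallyNonneg := hA.totallyNonneg.schurLast (hA.totallyNonneg.diag_pos hA.det_pos _)
  det_pos := det_schurLast_pos hA.det_pos (hA.totallyNonneg.diag_pos hA.det_pos _)
  superdiag_pos := hA.schurLast_superdiag_pos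
  subdiag_pos i j h := by
    simpa [schurLast_transpose] using hA.transpose.schurLast_superdiag_pos i j h

end GKMatrix

section Irreducible

variable {n : ℕ} {A : Matrix (Fin n) (Fin n) ℝ}

lemma MatIrreducible.transpose (h : MatIrreducible A) : MatIrreducible Aᵀ := by
  rintro ⟨σ, k, hk0, hkn, hzero⟩
  refine h ⟨Fin.revPerm.trans σ, n - k, by omega, by omega, fun a b ha hb => ?_⟩
  simpa using hzero b.rev a.rev (by simp only [Fin.val_rev]; omega)
    (by simp only [Fin.val_rev]; omega)

lemma TotallyNonneg.eq_zero_of_lower_eq_zero (hA : TotallyNonneg A) (hdiag : ∀ i, 0 < A i i)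
    {i j : Fin n} (hij : i < j) (h : A j i = 0) {p q : Fin n} (hp : j ≤ p) (hq : q ≤ i) :
    A p q = 0 := by
  have hcol : A p i = 0 := by
    rcases hp.lt_or_eq with hp | rfl
    · have := hA.mul_sub_mul_nonneg hp hij
      nlinarith [hdiag j, hA.entry_nonneg p i, hA.entry_nonneg p j]
    · exact h
  rcases hq.lt_or_eq with hq | rfl
  · have := hA.mul_sub_mul_nonneg (hij.trans_le hp) hq
    nlinarith [hdiag i, hA.entry_nonneg p q, hA.entry_nonneg i q]
  · exact hcol

lemma MatIrreducible.subdiag_pos (hirr : MatIrreducible A) (hA : TotallyNonneg A)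
    (hdiag : ∀ i, 0 < A i i) (i j : Fin n) (hij : (i : ℕ) + 1 = j) : 0 < A j i := by
  refine (hA.entry_nonneg j i).lt_of_ne fun h =>
    hirr ⟨Equiv.refl _, j, by omega, j.isLt, fun a b ha hb => ?_⟩
  simp only [Equiv.refl_apply]
  exact hA.eq_zero_of_lower_eq_zero hdiag (Fin.lt_def.2 (by omega)) h.symm ha
    (Fin.le_def.2 (by omega))

lemma IsGKMatrix.of_matIrreducible (hA : TotallyNonneg A) (hdet : 0 < A.det)
    (hirr : MatIrreducible A) : IsGKMatrix A where
  totallyNonneg := hA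
  det_pos := hdet
  superdiag_pos i j h := hirr.transpose.subdiag_pos hA.transpose
    (fun i => hA.diag_pos hdet i) i j h
  subdiag_pos := hirr.subdiag_pos hA (hA.diag_pos hdet)

end Irreducible

section UpStep

variable {k n : ℕ}

def IsUpStepAt (r c : Fin k → Fin n) (j : Fin k) : Prop :=
  (∀ i, i ≠ j → c i = r i) ∧ (c j : ℕ) = r j + 1

lemma IsUpStepAt.of_castSucc_comp {u v : Fin k → Fin n} {j : Fin k}
    (h : IsUpStepAt (Fin.castSucc ∘ u) (Fin.castSucc ∘ v) j) : IsUpStepAt u v j :=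
  ⟨fun i hi => Fin.castSucc_injective _ (h.1 i hi), by simpa using h.2⟩

lemma IsUpStepAt.of_snoc {m : ℕ} {u v : Fin k → Fin m} {a b : Fin m} {j : Fin k}
    (h : IsUpStepAt (Fin.snoc u a : Fin (k + 1) → Fin m) (Fin.snoc v b) j.castSucc) :
    IsUpStepAt u v j :=
  ⟨fun i hi => by simpa using h.1 i.castSucc (by simpa using hi), by simpa using h.2⟩

lemma IsUpStepAt.rev {r c : Fin k → Fin n} {j : Fin k} (h : IsUpStepAt r c j) :
    IsUpStepAt (Fin.rev ∘ c ∘ Fin.rev) (Fin.rev ∘ r ∘ Fin.rev) j.rev := by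
  refine ⟨fun i hi => ?_, ?_⟩
  · simp [h.1 i.rev (by simpa [Fin.rev_eq_iff] using hi)]
  · have := h.2
    have := (c j).isLt
    simp only [Function.comp_apply, Fin.rev_rev, Fin.val_rev]
    omega

lemma IsGKMatrix.det_submatrix_pos_of_isUpStepAt_of_ne_last
    {A : Matrix (Fin (n + 1)) (Fin (n + 1)) ℝ}
    (ih : ∀ B : Matrix (Fin n) (Fin n) ℝ, IsGKMatrix B → ∀ {k} {r c : Fin k → Fin n} {j},
      StrictMono r → StrictMono c → IsUpStepAt r c j → 0 < (B.submatrix r c).det)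
    (hA : IsGKMatrix A) {r c : Fin (k + 1) → Fin (n + 1)} {j : Fin (k + 1)} (hr : StrictMono r)
    (hc : StrictMono c) (hstep : IsUpStepAt r c j) (hj : j ≠ Fin.last k) :
    0 < (A.submatrix r c).det := by
  have hlast_eq : c (Fin.last k) = r (Fin.last k) := hstep.1 _ hj.symm
  by_cases hlast : r (Fin.last k) = Fin.last n
  · obtain ⟨u, hu, rfl⟩ := hr.exists_eq_snoc_castSucc_last hlast
    obtain ⟨v, hv, rfl⟩ := hc.exists_eq_snoc_castSucc_last (hlast_eq.trans hlast)
    obtain ⟨j, rfl⟩ := Fin.exists_castSucc_eq.2 hj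
    have hd := hA.totallyNonneg.diag_pos hA.det_pos (Fin.last n)
    rw [det_submatrix_snoc_castSucc_last A hd.ne']
    exact mul_pos hd (ih _ hA.schurLast hu hv hstep.of_snoc.of_castSucc_comp)
  · obtain ⟨u, hu, rfl⟩ := hr.exists_eq_castSucc_comp hlast
    obtain ⟨v, hv, rfl⟩ := hc.exists_eq_castSucc_comp (hlast_eq ▸ hlast)
    exact ih _ hA.submatrix_castSucc hu hv hstep.of_castSucc_comp

theorem IsGKMatrix.det_submatrix_pos_of_isUpStepAt : ∀ {n : ℕ} {A : Matrix (Fin n) (Fin n) ℝ},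
    IsGKMatrix A → ∀ {k : ℕ} {r c : Fin k → Fin n} {j : Fin k},
      StrictMono r → StrictMono c → IsUpStepAt r c j → 0 < (A.submatrix r c).det
  | 0, _, _, _, r, _, j, _, _, _ => (r j).elim0
  | _, _, _, 0, _, _, j, _, _, _ => j.elim0
  | n + 1, A, hA, k + 1, r, c, j, hr, hc, hstep => by
    have ih := fun (B : Matrix (Fin n) (Fin n) ℝ) hB => @det_submatrix_pos_of_isUpStepAt n B hB
    by_cases hj : j = Fin.last k
    · subst hj
      cases k with
      | zero =>
        rw [det_fin_one]
        exact hA.superdiag_pos _ _ hstep.2.symm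
      | succ k =>
        -- reversing and transposing moves the raised index to the front, away from the corner
        rw [← det_transpose_submatrix_rev_submatrix]
        exact hA.submatrix_rev.transpose.det_submatrix_pos_of_isUpStepAt_of_ne_last ih
          (strictMono_rev_comp_rev hc) (strictMono_rev_comp_rev hr) hstep.rev
          (by simp [Fin.ext_iff])
    · exact hA.det_submatrix_pos_of_isUpStepAt_of_ne_last ih hr hc hstep hj

lemma IsGKMatrix.det_submatrix_pos_of_isUpStepAt' {A : Matrix (Fin n) (Fin n) ℝ}
    (hA : IsGKMatrix A) {r c : Fin k → Fin n} {j : Fin k} (hr : StrictMono r) (hc : StrictMono c)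
    (hstep : IsUpStepAt c r j) : 0 < (A.submatrix r c).det := by
  rw [← det_transpose, transpose_submatrix]
  exact hA.transpose.det_submatrix_pos_of_isUpStepAt hc hr hstep

end UpStep

section Chain

variable {k n : ℕ}

def indexDist (r c : Fin k → Fin n) : ℕ :=
  ∑ i, Nat.dist (r i) (c i)

lemma indexDist_comm (r c : Fin k → Fin n) : indexDist r c = indexDist c r := by
  simp only [indexDist, Nat.dist_comm]

lemma exists_isUpStepAt_indexDist_lt {r c : Fin k → Fin n} (hr : StrictMono r)
    (hc : StrictMono c) (h : ∃ j, r j < c j) :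
    ∃ m j, StrictMono m ∧ IsUpStepAt r m j ∧ indexDist m c < indexDist r c := by
  classical
  set s := univ.filter fun j => r j < c j
  have hs : s.Nonempty := by simpa [s, Finset.Nonempty] using h
  -- raising the last index that lies below its target keeps the tuple increasing
  set j := s.max' hs
  have hj : r j < c j := (mem_filter.1 (s.max'_mem hs)).2
  have hmax : ∀ i, j < i → c i ≤ r i := fun i hi =>
    not_lt.1 fun hlt => (s.le_max' i (by simp [s, hlt])).not_gt hi
  have hlt : (r j : ℕ) + 1 < n := by have := (c j).isLt; rw [Fin.lt_def] at hj; omega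
  set m := Function.update r j ⟨r j + 1, hlt⟩
  refine ⟨m, j, fun a b hab => ?_, ⟨fun i hi => Function.update_of_ne hi _ _, by simp [m]⟩,
    sum_lt_sum (fun i _ => ?_) ⟨j, mem_univ _, ?_⟩⟩
  · rcases eq_or_ne a j with rfl | ha <;> rcases eq_or_ne b j with rfl | hb
    · exact absurd hab (lt_irrefl _)
    · have h1 := hmax b hab
      have h2 := hc hab
      simp only [m, Function.update_self, Function.update_of_ne hb, Fin.lt_def, Fin.le_def] at *
      omega
    · have h1 := hr hab
      simp only [m, Function.update_self, Function.update_of_ne ha, Fin.lt_def] at *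
      omega
    · simpa [m, Function.update_of_ne ha, Function.update_of_ne hb] using hr hab
  · rcases eq_or_ne i j with rfl | hi
    · simp only [m, Function.update_self, Nat.dist]
      rw [Fin.lt_def] at hj
      omega
    · simp [m, Function.update_of_ne hi]
  · simp only [m, Function.update_self, Nat.dist]
    rw [Fin.lt_def] at hj
    omega

theorem IsGKMatrix.det_submatrix_pow_pos {A : Matrix (Fin n) (Fin n) ℝ} (hA : IsGKMatrix A)
    (K : ℕ) : ∀ {k} {r c : Fin k → Fin n}, StrictMono r → StrictMono c →
      indexDist r c ≤ K → 0 < ((A ^ (K + 1)).submatrix r c).det := by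
  have hTN := hA.totallyNonneg
  induction K with
  | zero =>
    intro k r c hr hc hd
    obtain rfl : r = c := funext fun i => Fin.ext <| Nat.eq_of_dist_eq_zero <|
      sum_eq_zero_iff.1 (Nat.le_zero.1 hd) i (mem_univ i)
    simpa using hTN.det_submatrix_self_pos hA.det_pos hr
  | succ K ih =>
    intro k r c hr hc hd
    by_cases hrc : r = c
    · subst hrc
      calc 0 < (A.submatrix r r).det * ((A ^ (K + 1)).submatrix r r).det :=
            mul_pos (hTN.det_submatrix_self_pos hA.det_pos hr) (ih hr hr (by simp [indexDist]))
        _ ≤ _ := by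
          rw [pow_succ' A (K + 1)]
          exact hTN.det_submatrix_mul_det_submatrix_le (hTN.pow_succ K) hr hr hr
    by_cases hup : ∃ j, r j < c j
    · obtain ⟨m, j, hm, hstep, hdist⟩ := exists_isUpStepAt_indexDist_lt hr hc hup
      calc 0 < (A.submatrix r m).det * ((A ^ (K + 1)).submatrix m c).det :=
            mul_pos (hA.det_submatrix_pos_of_isUpStepAt hr hm hstep) (ih hm hc (by omega))
        _ ≤ _ := by
          rw [pow_succ' A (K + 1)]
          exact hTN.det_submatrix_mul_det_submatrix_le (hTN.pow_succ K) hr hm hc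
    · have hdown : ∃ j, c j < r j := by
        obtain ⟨j, hj⟩ := Function.ne_iff.1 hrc
        exact ⟨j, (not_lt.1 fun h => hup ⟨j, h⟩).lt_of_ne' hj⟩
      obtain ⟨m, j, hm, hstep, hdist⟩ := exists_isUpStepAt_indexDist_lt hc hr hdown
      rw [indexDist_comm c r] at hdist
      calc 0 < ((A ^ (K + 1)).submatrix r m).det * (A.submatrix m c).det :=
            mul_pos (ih hr hm (by rw [indexDist_comm]; omega))
              (hA.det_submatrix_pos_of_isUpStepAt' hm hc hstep)
        _ ≤ _ := by
          rw [pow_succ A (K + 1)]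
          exact (hTN.pow_succ K).det_submatrix_mul_det_submatrix_le hTN hr hm hc

lemma IsGKMatrix.totallyPos_pow {A : Matrix (Fin n) (Fin n) ℝ} (hA : IsGKMatrix A) :
    TotallyPos (A ^ (n * n + 1)) := fun k r c hr hc => by
  refine hA.det_submatrix_pow_pos _ hr hc ?_
  have hk : k ≤ n := by simpa using Fintype.card_le_of_injective r hr.injective
  calc indexDist r c ≤ ∑ _i : Fin k, n := sum_le_sum fun i _ => by
        have := (r i).isLt
        have := (c i).isLt
        unfold Nat.dist
        omega
    _ = k * n := by simp
    _ ≤ n * n := Nat.mul_le_mul_right n hk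

end Chain

section Oscillatory

variable {n : ℕ} {A : Matrix (Fin n) (Fin n) ℝ}

lemma Oscillatory.det_ne_zero (h : Oscillatory A) : A.det ≠ 0 := by
  obtain ⟨-, m, hm, hTP⟩ := h
  intro h0
  have := hTP n id id strictMono_id strictMono_id
  rw [submatrix_id_id, det_pow, h0, zero_pow hm.ne'] at this
  exact lt_irrefl 0 this

lemma Oscillatory.matIrreducible (h : Oscillatory A) : MatIrreducible A := by
  rintro ⟨σ, k, hk0, hkn, hzero⟩
  obtain ⟨-, m, -, hTP⟩ := h
  have hblock : ∀ t (a b : Fin n), k ≤ (a : ℕ) → (b : ℕ) < k →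
      (A ^ t) (σ a) (σ b) = 0 := by
    intro t
    induction t with
    | zero =>
      intro a b ha hb
      simp [one_apply, σ.injective.ne (Fin.ne_of_val_ne (by omega : (a : ℕ) ≠ b))]
    | succ t ih =>
      intro a b ha hb
      rw [pow_succ, mul_apply, ← Equiv.sum_comp σ]
      refine sum_eq_zero fun s _ => ?_
      by_cases hs : (s : ℕ) < k
      · rw [ih a s ha hs, zero_mul]
      · rw [hzero s b (not_lt.1 hs) hb, mul_zero]
  exact (hTP.entry_pos (σ ⟨k, hkn⟩) (σ ⟨0, hk0.trans hkn⟩)).ne' (hblock m _ _ le_rfl hk0)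

end Oscillatory

theorem stmt5 {n : ℕ} (A : Matrix (Fin n) (Fin n) ℝ) :
    Oscillatory A ↔ TotallyNonneg A ∧ A.det ≠ 0 ∧ MatIrreducible A := by
  refine ⟨fun h => ⟨h.1, h.det_ne_zero, h.matIrreducible⟩, fun ⟨hA, hdet, hirr⟩ => ?_⟩
  have hGK := IsGKMatrix.of_matIrreducible hA (hA.det_nonneg.lt_of_ne' hdet) hirr
  exact ⟨hA, n * n + 1, Nat.succ_pos _, hGK.totallyPos_pow⟩
end

section
/- Let A be a totally nonnegative n×n matrix. Then A is totally positive if and only if all corner minors of A are positive, where the corner minors are A({1,…,j}|{n−j+1,…,n}) and A({n−j+1,…,n}|{1,…,j}) for j = 1,…,n. -/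
/-- The lower-left corner minor M({n−j+1,…,n}|{1,…,j}). -/
def llMinor {n : ℕ} (M : Matrix (Fin n) (Fin n) ℝ) (j : ℕ) (hj : j ≤ n) : ℝ :=
  (M.submatrix (fun k : Fin j => (⟨n - j + k.val, by have := k.isLt; omega⟩ : Fin n))
      (fun k : Fin j => (⟨k.val, by have := k.isLt; omega⟩ : Fin n))).det

/-- The upper-right corner minor M({1,…,j}|{n−j+1,…,n}). -/
def urMinor {n : ℕ} (M : Matrix (Fin n) (Fin n) ℝ) (j : ℕ) (hj : j ≤ n) : ℝ :=
  (M.submatrix (fun k : Fin j => (⟨k.val, by have := k.isLt; omega⟩ : Fin n))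
      (fun k : Fin j => (⟨n - j + k.val, by have := k.isLt; omega⟩ : Fin n))).det

namespace TPAux

/-! ### StrictMono utilities -/

lemma strictMono_unique {k : ℕ} {α : Type*} [LinearOrder α] {f g : Fin k → α}
    (hf : StrictMono f) (hg : StrictMono g) (h : Set.range f = Set.range g) : f = g := by
  classical
  have hginj := hg.injective
  have hcard : (Finset.univ.image g).card = k := by
    rw [Finset.card_image_of_injective _ hginj, Finset.card_univ, Fintype.card_fin]
  have hmemg : ∀ x, g x ∈ Finset.univ.image g := fun x =>
    Finset.mem_image_of_mem _ (Finset.mem_univ x)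
  have hmemf : ∀ x, f x ∈ Finset.univ.image g := by
    intro x
    have : f x ∈ Set.range g := by rw [← h]; exact ⟨x, rfl⟩
    obtain ⟨y, hy⟩ := this
    rw [← hy]; exact hmemg y
  exact (Finset.orderEmbOfFin_unique hcard hmemf hf).trans
    (Finset.orderEmbOfFin_unique hcard hmemg hg).symm

lemma range_comp_succAbove {k : ℕ} {α : Type*} (F : Fin (k+1) → α) (hF : Function.Injective F)
    (p : Fin (k+1)) : Set.range (F ∘ p.succAbove) = Set.range F \ {F p} := by
  rw [Set.range_comp, Fin.range_succAbove]
  ext y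
  constructor
  · rintro ⟨t, ht, rfl⟩
    refine ⟨⟨t, rfl⟩, ?_⟩
    simp only [Set.mem_singleton_iff]
    intro hc
    exact ht (hF hc)
  · rintro ⟨⟨t, rfl⟩, hy⟩
    refine ⟨t, ?_, rfl⟩
    simp only [Set.mem_compl_iff, Set.mem_singleton_iff]
    intro hc
    subst hc
    exact hy rfl

lemma exists_insert {k n : ℕ} {f : Fin k → Fin n} (hf : StrictMono f) {x : Fin n}
    (hx : x ∉ Set.range f) :
    ∃ (F : Fin (k+1) → Fin n) (p : Fin (k+1)), StrictMono F ∧ F p = x ∧ F ∘ p.succAbove = f := by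
  classical
  have hxs : x ∉ Finset.univ.image f := by
    simp only [Finset.mem_image]
    rintro ⟨y, -, hy⟩
    exact hx ⟨y, hy⟩
  have hcard : (insert x (Finset.univ.image f)).card = k + 1 := by
    rw [Finset.card_insert_of_notMem hxs,
      Finset.card_image_of_injective _ hf.injective, Finset.card_univ, Fintype.card_fin]
  set F := ⇑((insert x (Finset.univ.image f)).orderEmbOfFin hcard) with hFdef
  have hFs : StrictMono F := ((insert x (Finset.univ.image f)).orderEmbOfFin hcard).strictMono
  have hrangeF : Set.range F = ↑(insert x (Finset.univ.image f)) :=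
    Finset.range_orderEmbOfFin _ hcard
  have hxr : x ∈ Set.range F := by
    rw [hrangeF]; exact_mod_cast Finset.mem_insert_self _ _
  obtain ⟨p, hp⟩ := hxr
  refine ⟨F, p, hFs, hp, ?_⟩
  apply strictMono_unique (hFs.comp (Fin.strictMono_succAbove p)) hf
  rw [range_comp_succAbove F hFs.injective, hp, hrangeF]
  rw [Finset.coe_insert]
  have himg : (↑(Finset.univ.image f) : Set (Fin n)) = Set.range f := by
    rw [Finset.coe_image, Finset.coe_univ, Set.image_univ]
  rw [himg, Set.insert_diff_of_mem _ (Set.mem_singleton x), Set.diff_singleton_eq_self hx]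

/-! ### Pi.single composition -/

lemma single_comp_of_eq {α β M₀ : Type*} [DecidableEq α] [DecidableEq β] [Zero M₀] {h : α → β}
    (hinj : Function.Injective h) (a : α) (x : M₀) :
    (Pi.single (h a) x) ∘ h = Pi.single a x := by
  funext t
  simp only [Function.comp_apply, Pi.single_apply]
  by_cases ht : t = a
  · subst ht; simp
  · rw [if_neg (fun hc => ht (hinj hc)), if_neg ht]

lemma single_comp_of_notMem {α β M₀ : Type*} [DecidableEq β] [Zero M₀] {h : α → β}
    {b : β} (hb : b ∉ Set.range h) (x : M₀) :
    (Pi.single b x) ∘ h = 0 := by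
  funext t
  simp only [Function.comp_apply, Pi.single_apply, Pi.zero_apply]
  rw [if_neg]
  intro hc
  exact hb ⟨t, hc⟩

/-! ### submatrix and updateColumn -/

lemma submatrix_updateColumn {R m₁ n₁ m₂ n₂ : Type*} [DecidableEq n₁] [DecidableEq n₂]
    (M : Matrix m₁ n₁ R) (ρ : m₂ → m₁) {γ : n₂ → n₁} (hγ : Function.Injective γ)
    (c : n₂) (u : m₁ → R) :
    (M.updateCol (γ c) u).submatrix ρ γ = (M.submatrix ρ γ).updateCol c (u ∘ ρ) := by
  ext i j
  by_cases hj : j = c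
  · subst hj
    simp [Matrix.submatrix_apply, Matrix.updateCol_self]
  · rw [Matrix.submatrix_apply, Matrix.updateCol_ne (fun hc => hj (hγ hc)),
      Matrix.updateCol_ne hj, Matrix.submatrix_apply]

lemma submatrix_updateCol_of_notMem {R m₁ n₁ m₂ n₂ : Type*} [DecidableEq n₁]
    (M : Matrix m₁ n₁ R) (ρ : m₂ → m₁) {γ : n₂ → n₁} {c : n₁}
    (hc : c ∉ Set.range γ) (u : m₁ → R) :
    (M.updateCol c u).submatrix ρ γ = M.submatrix ρ γ := by
  ext i j
  rw [Matrix.submatrix_apply, Matrix.updateCol_ne (fun h => hc ⟨j, h⟩), Matrix.submatrix_apply]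

lemma updateCol_comm {R m₁ n₁ : Type*} [DecidableEq n₁] (M : Matrix m₁ n₁ R)
    {c₁ c₂ : n₁} (h : c₁ ≠ c₂) (u v : m₁ → R) :
    (M.updateCol c₁ u).updateCol c₂ v = (M.updateCol c₂ v).updateCol c₁ u := by
  ext i j
  by_cases h2 : j = c₂
  · subst h2
    rw [Matrix.updateCol_self, Matrix.updateCol_ne (Ne.symm h), Matrix.updateCol_self]
  · by_cases h1 : j = c₁
    · subst h1
      rw [Matrix.updateCol_ne h2, Matrix.updateCol_self, Matrix.updateCol_self]
    · rw [Matrix.updateCol_ne h2, Matrix.updateCol_ne h1, Matrix.updateCol_ne h1,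
        Matrix.updateCol_ne h2]

/-! ### Cofactor expansions -/

lemma det_updateRow_single {R : Type*} [CommRing R] {s : ℕ} (M : Matrix (Fin (s+1)) (Fin (s+1)) R)
    (i j : Fin (s+1)) (x : R) :
    (M.updateRow i (Pi.single j x)).det
      = x * (-1)^((i:ℕ)+(j:ℕ)) * (M.submatrix i.succAbove j.succAbove).det := by
  have hx : (Pi.single j x : Fin (s+1) → R) = x • (Pi.single j (1:R) : Fin (s+1) → R) := by
    funext t
    simp only [Pi.smul_apply, Pi.single_apply, smul_eq_mul, mul_ite, mul_one, mul_zero]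
  rw [hx, Matrix.det_updateRow_smul, Matrix.det_succ_row _ i, Finset.sum_eq_single j]
  · rw [Matrix.submatrix_updateRow_succAbove]
    simp only [Matrix.updateRow_self, Pi.single_eq_same]
    ring
  · intro b _ hb
    simp only [Matrix.updateRow_self, Pi.single_apply, if_neg hb, mul_zero, zero_mul]
  · intro h
    exact absurd (Finset.mem_univ j) h

lemma det_updateColumn_single {R : Type*} [CommRing R] {s : ℕ}
    (M : Matrix (Fin (s+1)) (Fin (s+1)) R) (i j : Fin (s+1)) (x : R) :
    (M.updateCol j (Pi.single i x)).det
      = x * (-1)^((i:ℕ)+(j:ℕ)) * (M.submatrix i.succAbove j.succAbove).det := by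
  have hx : (Pi.single i x : Fin (s+1) → R) = x • (Pi.single i (1:R) : Fin (s+1) → R) := by
    funext t
    simp only [Pi.smul_apply, Pi.single_apply, smul_eq_mul, mul_ite, mul_one, mul_zero]
  rw [hx, Matrix.det_updateCol_smul, Matrix.det_succ_column _ j, Finset.sum_eq_single i]
  · rw [Matrix.submatrix_updateCol_succAbove]
    simp only [Matrix.updateCol_self, Pi.single_eq_same]
    ring
  · intro b _ hb
    simp only [Matrix.updateCol_self, Pi.single_apply, if_neg hb, mul_zero, zero_mul]
  · intro h
    exact absurd (Finset.mem_univ i) h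

lemma det_one_updateColumn {R : Type*} [CommRing R] {n : Type*} [DecidableEq n] [Fintype n]
    (j : n) (w : n → R) : ((1 : Matrix n n R).updateCol j w).det = w j := by
  have hw : w = fun k => ∑ i, w i • (1 : Matrix n n R) k i := by
    funext t
    simp [Matrix.one_apply, mul_ite, Finset.sum_ite_eq]
  calc ((1 : Matrix n n R).updateCol j w).det
      = ((1 : Matrix n n R).updateCol j (fun k => ∑ i, w i • (1 : Matrix n n R) k i)).det := by
        rw [← hw]
    _ = w j • (1 : Matrix n n R).det := Matrix.det_updateCol_sum _ _ _
    _ = w j := by simp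


/-! ### Determinant of identity with two replaced columns -/

section TwoUpdates

variable {R : Type*} [CommRing R] {s : ℕ}

private lemma row_zero_det {c₁ c₂ : Fin (s+1)} (a b : Fin (s+1) → R)
    (r : Fin (s+1)) (hr : r = c₁ ∨ r = c₂) (ha : a r = 0) (hb : b r = 0) :
    (((1 : Matrix (Fin (s+1)) (Fin (s+1)) R).updateCol c₁ a).updateCol c₂ b).det = 0 := by
  apply Matrix.det_eq_zero_of_row_eq_zero r
  intro j
  by_cases h2 : j = c₂
  · subst h2; rw [Matrix.updateCol_self]; exact hb
  · rw [Matrix.updateCol_ne h2]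
    by_cases h1 : j = c₁
    · subst h1; rw [Matrix.updateCol_self]; exact ha
    · rw [Matrix.updateCol_ne h1]
      rcases hr with rfl | rfl
      · exact Matrix.one_apply_ne (Ne.symm h1)
      · exact Matrix.one_apply_ne (Ne.symm h2)

private lemma succAbove_lower {c₁ c₂ : Fin (s+1)} (hc : c₁ < c₂) :
    c₂.succAbove ⟨c₁.val, by omega⟩ = c₁ := by
  rw [Fin.succAbove_of_castSucc_lt]
  · rfl
  · rw [Fin.lt_def]
    exact hc

-- term (single c₁ x, single c₂ y)
private lemma T_diag (c₁ c₂ : Fin (s+1)) (hc : c₁ < c₂) (x y : R) :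
    (((1 : Matrix (Fin (s+1)) (Fin (s+1)) R).updateCol c₁ (Pi.single c₁ x)).updateCol c₂
        (Pi.single c₂ y)).det = x * y := by
  have h1 : c₁.val < c₂.val := hc
  have h2 : c₂.val < s+1 := c₂.isLt
  set γ : Fin s := ⟨c₁.val, by omega⟩ with hγ
  have hγeq : c₂.succAbove γ = c₁ := succAbove_lower hc
  rw [det_updateColumn_single]
  rw [show c₁ = c₂.succAbove γ from hγeq.symm]
  rw [submatrix_updateColumn _ _ (Fin.succAbove_right_injective) γ]
  rw [Matrix.submatrix_one _ (Fin.succAbove_right_injective)]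
  rw [single_comp_of_eq (Fin.succAbove_right_injective) γ x]
  rw [det_one_updateColumn, Pi.single_eq_same]
  have : ((-1 : R))^((c₂:ℕ)+(c₂:ℕ)) = 1 := Even.neg_one_pow ⟨c₂, rfl⟩
  rw [this]
  ring

-- term (single c₂ x, single c₁ y)
private lemma T_anti (c₁ c₂ : Fin (s+1)) (hc : c₁ < c₂) (x y : R) :
    (((1 : Matrix (Fin (s+1)) (Fin (s+1)) R).updateCol c₁ (Pi.single c₂ x)).updateCol c₂
        (Pi.single c₁ y)).det = -(x * y) := by
  obtain ⟨s', rfl⟩ : ∃ s', s = s' + 1 := by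
    have h1 : c₁.val < c₂.val := hc
    have h2 : c₂.val < s+1 := c₂.isLt
    exact ⟨s - 1, by omega⟩
  have h1 : c₁.val < c₂.val := hc
  have h2 : c₂.val < s'+2 := c₂.isLt
  set γ : Fin (s'+1) := ⟨c₁.val, by omega⟩ with hγ
  have hγeq : c₂.succAbove γ = c₁ := succAbove_lower hc
  set w : Fin (s'+1) := ⟨c₂.val - 1, by omega⟩ with hw
  have hweq : c₁.succAbove w = c₂ := by
    rw [Fin.succAbove_of_le_castSucc]
    · apply Fin.ext
      simp only [Fin.val_succ, hw]
      omega
    · rw [Fin.le_def]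
      simp only [Fin.coe_castSucc, hw]
      omega
  rw [det_updateColumn_single]
  rw [show c₁ = c₂.succAbove γ from hγeq.symm]
  rw [submatrix_updateColumn _ _ (Fin.succAbove_right_injective) γ]
  rw [hγeq]
  rw [show (Pi.single c₂ (x:R)) ∘ c₁.succAbove = Pi.single w x by
    rw [← hweq]; exact single_comp_of_eq (Fin.succAbove_right_injective) w x]
  set Z : Matrix (Fin (s'+1)) (Fin (s'+1)) R :=
    ((1 : Matrix (Fin (s'+2)) (Fin (s'+2)) R).submatrix c₁.succAbove c₂.succAbove) with hZ
  have hrow : (Z.updateCol γ (Pi.single w x)) w = Pi.single γ x := by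
    funext j
    by_cases hj : j = γ
    · subst hj
      rw [Matrix.updateCol_self, Pi.single_eq_same, Pi.single_eq_same]
    · rw [Matrix.updateCol_ne hj, Pi.single_apply, if_neg hj]
      rw [hZ, Matrix.submatrix_apply, hweq]
      exact Matrix.one_apply_ne (Ne.symm (Fin.succAbove_ne c₂ j))
  have hZr : Z.updateCol γ (Pi.single w x)
      = (Z.updateCol γ (Pi.single w x)).updateRow w (Pi.single γ x) := by
    rw [← hrow, Matrix.updateRow_eq_self]
  rw [hZr, det_updateRow_single]
  rw [show ((Z.updateCol γ (Pi.single w x)).submatrix w.succAbove γ.succAbove)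
      = Z.submatrix w.succAbove γ.succAbove from
    submatrix_updateCol_of_notMem _ _ (by
      rw [Fin.range_succAbove]
      simp) _]
  rw [hZ, Matrix.submatrix_submatrix]
  have hmapeq : c₁.succAbove ∘ w.succAbove = c₂.succAbove ∘ γ.succAbove := by
    apply strictMono_unique
      ((Fin.strictMono_succAbove c₁).comp (Fin.strictMono_succAbove w))
      ((Fin.strictMono_succAbove c₂).comp (Fin.strictMono_succAbove γ))
    rw [range_comp_succAbove _ (Fin.succAbove_right_injective) w,
      range_comp_succAbove _ (Fin.succAbove_right_injective) γ,
      Fin.range_succAbove, Fin.range_succAbove, hweq, hγeq]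
    ext t
    simp only [Set.mem_diff, Set.mem_compl_iff, Set.mem_singleton_iff]
    tauto
  rw [hmapeq,
    Matrix.submatrix_one _ ((Fin.succAbove_right_injective).comp (Fin.succAbove_right_injective)),
    Matrix.det_one]
  have hodd : Odd ((c₁:ℕ)+(c₂:ℕ) + ((w:ℕ)+(γ:ℕ))) := by
    refine ⟨(c₁:ℕ) + (c₂:ℕ) - 1, ?_⟩
    have hwv : (w:ℕ) = (c₂:ℕ) - 1 := rfl
    have hγv : (γ:ℕ) = (c₁:ℕ) := rfl
    omega
  have hsplit : y * (-1:R)^((c₁:ℕ)+(c₂:ℕ)) * (x * (-1:R)^((w:ℕ)+(γ:ℕ)) * 1)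
      = x * y * ((-1:R)^((c₁:ℕ)+(c₂:ℕ)+((w:ℕ)+(γ:ℕ)))) := by
    rw [pow_add]
    ring
  rw [hsplit, Odd.neg_one_pow hodd]
  ring

lemma det_one_two_updates (c₁ c₂ : Fin (s+1)) (hc : c₁ < c₂) (u v : Fin (s+1) → R) :
    (((1 : Matrix (Fin (s+1)) (Fin (s+1)) R).updateCol c₁ u).updateCol c₂ v).det
      = u c₁ * v c₂ - u c₂ * v c₁ := by
  classical
  have hne : c₁ ≠ c₂ := ne_of_lt hc
  have hne' : c₂ ≠ c₁ := Ne.symm hne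
  set u₀ : Fin (s+1) → R := fun t => if t = c₁ ∨ t = c₂ then 0 else u t with hu₀
  set v₀ : Fin (s+1) → R := fun t => if t = c₁ ∨ t = c₂ then 0 else v t with hv₀
  have hu0c1 : u₀ c₁ = 0 := by simp [hu₀]
  have hu0c2 : u₀ c₂ = 0 := by simp [hu₀]
  have hv0c1 : v₀ c₁ = 0 := by simp [hv₀]
  have hv0c2 : v₀ c₂ = 0 := by simp [hv₀]
  have hu : u = u₀ + (Pi.single c₁ (u c₁) + Pi.single c₂ (u c₂)) := by
    funext t
    simp only [Pi.add_apply, hu₀, Pi.single_apply]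
    by_cases h1 : t = c₁
    · subst h1
      simp [hne]
    · by_cases h2 : t = c₂
      · subst h2
        simp [hne', h1]
      · simp [h1, h2]
  have hv : v = v₀ + (Pi.single c₁ (v c₁) + Pi.single c₂ (v c₂)) := by
    funext t
    simp only [Pi.add_apply, hv₀, Pi.single_apply]
    by_cases h1 : t = c₁
    · subst h1
      simp [hne]
    · by_cases h2 : t = c₂
      · subst h2
        simp [hne', h1]
      · simp [h1, h2]
  have Tadd_left : ∀ (a₁ a₂ b : Fin (s+1) → R),
      (((1 : Matrix (Fin (s+1)) (Fin (s+1)) R).updateCol c₁ (a₁ + a₂)).updateCol c₂ b).det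
        = (((1 : Matrix (Fin (s+1)) (Fin (s+1)) R).updateCol c₁ a₁).updateCol c₂ b).det
          + (((1 : Matrix (Fin (s+1)) (Fin (s+1)) R).updateCol c₁ a₂).updateCol c₂ b).det := by
    intro a₁ a₂ b
    rw [updateCol_comm _ hne, Matrix.det_updateCol_add,
      updateCol_comm _ hne', updateCol_comm _ hne']
  have key : ∀ b : Fin (s+1) → R,
      (((1 : Matrix (Fin (s+1)) (Fin (s+1)) R).updateCol c₁ u).updateCol c₂ b).det
        = (((1 : Matrix (Fin (s+1)) (Fin (s+1)) R).updateCol c₁ u₀).updateCol c₂ b).det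
          + ((((1 : Matrix (Fin (s+1)) (Fin (s+1)) R).updateCol c₁
              (Pi.single c₁ (u c₁))).updateCol c₂ b).det
            + (((1 : Matrix (Fin (s+1)) (Fin (s+1)) R).updateCol c₁
              (Pi.single c₂ (u c₂))).updateCol c₂ b).det) := by
    intro b
    conv_lhs => rw [hu]
    rw [Tadd_left, Tadd_left]
  have expand :
      (((1 : Matrix (Fin (s+1)) (Fin (s+1)) R).updateCol c₁ u).updateCol c₂ v).det
        = (((1 : Matrix (Fin (s+1)) (Fin (s+1)) R).updateCol c₁ u).updateCol c₂ v₀).det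
          + ((((1 : Matrix (Fin (s+1)) (Fin (s+1)) R).updateCol c₁ u).updateCol c₂
              (Pi.single c₁ (v c₁))).det
            + (((1 : Matrix (Fin (s+1)) (Fin (s+1)) R).updateCol c₁ u).updateCol c₂
              (Pi.single c₂ (v c₂))).det) := by
    conv_lhs => rw [hv]
    rw [Matrix.det_updateCol_add, Matrix.det_updateCol_add]
  rw [expand, key, key, key]
  rw [row_zero_det u₀ v₀ c₁ (Or.inl rfl) hu0c1 hv0c1]
  rw [row_zero_det (Pi.single c₁ (u c₁)) v₀ c₂ (Or.inr rfl) (Pi.single_eq_of_ne hne' _) hv0c2]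
  rw [row_zero_det (Pi.single c₂ (u c₂)) v₀ c₁ (Or.inl rfl) (Pi.single_eq_of_ne hne _) hv0c1]
  rw [row_zero_det u₀ (Pi.single c₁ (v c₁)) c₂ (Or.inr rfl) hu0c2 (Pi.single_eq_of_ne hne' _)]
  rw [row_zero_det (Pi.single c₁ (u c₁)) (Pi.single c₁ (v c₁)) c₂ (Or.inr rfl)
    (Pi.single_eq_of_ne hne' _) (Pi.single_eq_of_ne hne' _)]
  rw [row_zero_det u₀ (Pi.single c₂ (v c₂)) c₁ (Or.inl rfl) hu0c1 (Pi.single_eq_of_ne hne _)]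
  rw [row_zero_det (Pi.single c₂ (u c₂)) (Pi.single c₂ (v c₂)) c₁ (Or.inl rfl)
    (Pi.single_eq_of_ne hne _) (Pi.single_eq_of_ne hne _)]
  rw [T_diag c₁ c₂ hc, T_anti c₁ c₂ hc]
  ring

end TwoUpdates

/-! ### The 2-bordered Sylvester determinant identity -/

section Sylvester

variable {R : Type*} [CommRing R] {m : ℕ}

lemma succAbove_val_eq {r₁ r₂ : Fin (m+2)} {ρ : Fin (m+1)} (hr : r₁ < r₂)
    (hρ : r₂.succAbove ρ = r₁) : (ρ:ℕ) = (r₁:ℕ) := by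
  by_cases h : ρ.castSucc < r₂
  · rw [Fin.succAbove_of_castSucc_lt _ _ h] at hρ
    rw [← hρ]
    rfl
  · rw [Fin.succAbove_of_le_castSucc _ _ (le_of_not_gt h)] at hρ
    exfalso
    have h1 : (r₂:ℕ) ≤ (ρ:ℕ) := by simpa [Fin.le_def] using le_of_not_gt h
    have h2 : (r₁:ℕ) = (ρ:ℕ)+1 := by rw [← hρ]; rfl
    have h3 : (r₁:ℕ) < (r₂:ℕ) := hr
    omega

lemma syl2_mul (N : Matrix (Fin (m+2)) (Fin (m+2)) R) (r₁ r₂ c₁ c₂ : Fin (m+2))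
    (hr : r₁ < r₂) (hc : c₁ < c₂) (ρ γ : Fin (m+1))
    (hρ : r₂.succAbove ρ = r₁) (hγ : c₂.succAbove γ = c₁) :
    N.det * ((N.submatrix r₁.succAbove c₁.succAbove).det
        * (N.submatrix r₂.succAbove c₂.succAbove).det
      - (N.submatrix r₁.succAbove c₂.succAbove).det
        * (N.submatrix r₂.succAbove c₁.succAbove).det)
    = N.det * (N.det *
        (N.submatrix (r₂.succAbove ∘ ρ.succAbove) (c₂.succAbove ∘ γ.succAbove)).det) := by
  classical
  have hρv : (ρ:ℕ) = (r₁:ℕ) := succAbove_val_eq hr hρ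
  have hγv : (γ:ℕ) = (c₁:ℕ) := succAbove_val_eq hc hγ
  have hne : c₁ ≠ c₂ := ne_of_lt hc
  obtain ⟨P, hP⟩ : ∃ P : Matrix (Fin (m+2)) (Fin (m+2)) R,
      P = ((1 : Matrix (Fin (m+2)) (Fin (m+2)) R).updateCol c₁
        (fun i => N.adjugate i r₁)).updateCol c₂ (fun i => N.adjugate i r₂) := ⟨_, rfl⟩
  have hPc2 : ∀ t, P t c₂ = N.adjugate t r₂ := by
    intro t
    rw [hP, Matrix.updateCol_self]
  have hPc1 : ∀ t, P t c₁ = N.adjugate t r₁ := by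
    intro t
    rw [hP, Matrix.updateCol_ne hne, Matrix.updateCol_self]
  have hPother : ∀ t b, b ≠ c₁ → b ≠ c₂ → P t b = (1 : Matrix (Fin (m+2)) (Fin (m+2)) R) t b := by
    intro t b h1 h2
    rw [hP, Matrix.updateCol_ne h2, Matrix.updateCol_ne h1]
  have hNP : N * P = ((N.updateCol c₁ (Pi.single r₁ N.det)).updateCol c₂
      (Pi.single r₂ N.det)) := by
    ext i b
    rw [Matrix.mul_apply]
    by_cases h2 : b = c₂
    · rw [h2]
      simp only [hPc2]
      have hsum : ∑ t, N i t * N.adjugate t r₂ = (N * N.adjugate) i r₂ := by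
        rw [Matrix.mul_apply]
      rw [hsum, Matrix.mul_adjugate, Matrix.updateCol_self, Matrix.smul_apply,
        Matrix.one_apply, Pi.single_apply, smul_eq_mul, mul_ite, mul_one, mul_zero]
    · rw [Matrix.updateCol_ne h2]
      by_cases h1 : b = c₁
      · rw [h1]
        simp only [hPc1]
        have hsum : ∑ t, N i t * N.adjugate t r₁ = (N * N.adjugate) i r₁ := by
          rw [Matrix.mul_apply]
        rw [hsum, Matrix.mul_adjugate, Matrix.updateCol_self, Matrix.smul_apply,
          Matrix.one_apply, Pi.single_apply, smul_eq_mul, mul_ite, mul_one, mul_zero]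
      · rw [Matrix.updateCol_ne h1]
        simp only [fun t => hPother t b h1 h2, Matrix.one_apply, mul_ite, mul_one, mul_zero]
        rw [Finset.sum_ite_eq' Finset.univ b (fun t => N i t)]
        simp
  have hdetNP : (N * P).det = N.det * N.det * ((-1 : R)^((r₂:ℕ)+(c₂:ℕ)) * ((-1 : R)^((r₁:ℕ)+(c₁:ℕ))
      * (N.submatrix (r₂.succAbove ∘ ρ.succAbove) (c₂.succAbove ∘ γ.succAbove)).det)) := by
    rw [hNP, det_updateColumn_single]
    rw [show (N.updateCol c₁ (Pi.single r₁ N.det)).submatrix r₂.succAbove c₂.succAbove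
        = (N.submatrix r₂.succAbove c₂.succAbove).updateCol γ
            ((Pi.single r₁ N.det) ∘ r₂.succAbove) from by
      rw [← hγ]
      exact submatrix_updateColumn _ _ Fin.succAbove_right_injective _ _]
    rw [show (Pi.single r₁ (N.det) : Fin (m+2) → R) ∘ r₂.succAbove = Pi.single ρ N.det from by
      rw [← hρ]
      exact single_comp_of_eq Fin.succAbove_right_injective _ _]
    rw [det_updateColumn_single, Matrix.submatrix_submatrix, hρv, hγv]
    ring
  have hdetP : P.det = N.adjugate c₁ r₁ * N.adjugate c₂ r₂
      - N.adjugate c₂ r₁ * N.adjugate c₁ r₂ := by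
    rw [hP]
    exact det_one_two_updates c₁ c₂ hc _ _
  have hu11 : N.adjugate c₁ r₁
      = (-1 : R)^((r₁:ℕ)+(c₁:ℕ)) * (N.submatrix r₁.succAbove c₁.succAbove).det := by
    rw [Matrix.adjugate_apply, det_updateRow_single]
    ring
  have hv22 : N.adjugate c₂ r₂
      = (-1 : R)^((r₂:ℕ)+(c₂:ℕ)) * (N.submatrix r₂.succAbove c₂.succAbove).det := by
    rw [Matrix.adjugate_apply, det_updateRow_single]
    ring
  have hu12 : N.adjugate c₂ r₁
      = (-1 : R)^((r₁:ℕ)+(c₂:ℕ)) * (N.submatrix r₁.succAbove c₂.succAbove).det := by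
    rw [Matrix.adjugate_apply, det_updateRow_single]
    ring
  have hv21 : N.adjugate c₁ r₂
      = (-1 : R)^((r₂:ℕ)+(c₁:ℕ)) * (N.submatrix r₂.succAbove c₁.succAbove).det := by
    rw [Matrix.adjugate_apply, det_updateRow_single]
    ring
  have hmul : N.det * P.det = (N * P).det := (Matrix.det_mul N P).symm
  have hEE : (-1 : R)^((r₁:ℕ)+(c₁:ℕ)) * (-1 : R)^((r₂:ℕ)+(c₂:ℕ))
      * ((-1 : R)^((r₁:ℕ)+(c₁:ℕ)) * (-1 : R)^((r₂:ℕ)+(c₂:ℕ))) = 1 := by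
    have h1 : (-1 : R)^((r₁:ℕ)+(c₁:ℕ)) * (-1 : R)^((r₁:ℕ)+(c₁:ℕ)) = 1 := by
      rw [← pow_add]
      exact Even.neg_one_pow ⟨(r₁:ℕ)+(c₁:ℕ), rfl⟩
    have h2 : (-1 : R)^((r₂:ℕ)+(c₂:ℕ)) * (-1 : R)^((r₂:ℕ)+(c₂:ℕ)) = 1 := by
      rw [← pow_add]
      exact Even.neg_one_pow ⟨(r₂:ℕ)+(c₂:ℕ), rfl⟩
    calc (-1 : R)^((r₁:ℕ)+(c₁:ℕ)) * (-1 : R)^((r₂:ℕ)+(c₂:ℕ))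
        * ((-1 : R)^((r₁:ℕ)+(c₁:ℕ)) * (-1 : R)^((r₂:ℕ)+(c₂:ℕ)))
        = ((-1 : R)^((r₁:ℕ)+(c₁:ℕ)) * (-1 : R)^((r₁:ℕ)+(c₁:ℕ)))
          * ((-1 : R)^((r₂:ℕ)+(c₂:ℕ)) * (-1 : R)^((r₂:ℕ)+(c₂:ℕ))) := by ring
      _ = 1 := by rw [h1, h2, mul_one]
  have hsign : (-1 : R)^((r₁:ℕ)+(c₂:ℕ)) * (-1 : R)^((r₂:ℕ)+(c₁:ℕ))
      = (-1 : R)^((r₁:ℕ)+(c₁:ℕ)) * (-1 : R)^((r₂:ℕ)+(c₂:ℕ)) := by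
    rw [← pow_add, ← pow_add]
    congr 1
    omega
  have key : N.det * P.det = N.det * ((-1 : R)^((r₁:ℕ)+(c₁:ℕ)) * (-1 : R)^((r₂:ℕ)+(c₂:ℕ))
      * ((N.submatrix r₁.succAbove c₁.succAbove).det
          * (N.submatrix r₂.succAbove c₂.succAbove).det
        - (N.submatrix r₁.succAbove c₂.succAbove).det
          * (N.submatrix r₂.succAbove c₁.succAbove).det)) := by
    rw [hdetP, hu11, hv22, hu12, hv21]
    have hcross : (-1 : R)^((r₁:ℕ)+(c₂:ℕ)) * (N.submatrix r₁.succAbove c₂.succAbove).det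
        * ((-1 : R)^((r₂:ℕ)+(c₁:ℕ)) * (N.submatrix r₂.succAbove c₁.succAbove).det)
        = (-1 : R)^((r₁:ℕ)+(c₁:ℕ)) * (-1 : R)^((r₂:ℕ)+(c₂:ℕ))
          * ((N.submatrix r₁.succAbove c₂.succAbove).det
            * (N.submatrix r₂.succAbove c₁.succAbove).det) := by
      calc (-1 : R)^((r₁:ℕ)+(c₂:ℕ)) * (N.submatrix r₁.succAbove c₂.succAbove).det
          * ((-1 : R)^((r₂:ℕ)+(c₁:ℕ)) * (N.submatrix r₂.succAbove c₁.succAbove).det)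
          = (-1 : R)^((r₁:ℕ)+(c₂:ℕ)) * (-1 : R)^((r₂:ℕ)+(c₁:ℕ))
            * ((N.submatrix r₁.succAbove c₂.succAbove).det
              * (N.submatrix r₂.succAbove c₁.succAbove).det) := by ring
        _ = _ := by rw [hsign]
    rw [mul_sub, hcross]
    ring
  have main := (key.symm.trans hmul).trans hdetNP
  -- main : N.det * (sign * X) = N.det * N.det * (sign' * (sign'' * inner))
  have main2 := congrArg (fun z =>
    (-1 : R)^((r₁:ℕ)+(c₁:ℕ)) * (-1 : R)^((r₂:ℕ)+(c₂:ℕ)) * z) main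
  calc N.det * ((N.submatrix r₁.succAbove c₁.succAbove).det
        * (N.submatrix r₂.succAbove c₂.succAbove).det
      - (N.submatrix r₁.succAbove c₂.succAbove).det
        * (N.submatrix r₂.succAbove c₁.succAbove).det)
      = ((-1 : R)^((r₁:ℕ)+(c₁:ℕ)) * (-1 : R)^((r₂:ℕ)+(c₂:ℕ))
        * ((-1 : R)^((r₁:ℕ)+(c₁:ℕ)) * (-1 : R)^((r₂:ℕ)+(c₂:ℕ))))
        * (N.det * ((N.submatrix r₁.succAbove c₁.succAbove).det
          * (N.submatrix r₂.succAbove c₂.succAbove).det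
        - (N.submatrix r₁.succAbove c₂.succAbove).det
          * (N.submatrix r₂.succAbove c₁.succAbove).det)) := by
        rw [hEE, one_mul]
    _ = (-1 : R)^((r₁:ℕ)+(c₁:ℕ)) * (-1 : R)^((r₂:ℕ)+(c₂:ℕ))
        * (N.det * ((-1 : R)^((r₁:ℕ)+(c₁:ℕ)) * (-1 : R)^((r₂:ℕ)+(c₂:ℕ))
          * ((N.submatrix r₁.succAbove c₁.succAbove).det
            * (N.submatrix r₂.succAbove c₂.succAbove).det
          - (N.submatrix r₁.succAbove c₂.succAbove).det
            * (N.submatrix r₂.succAbove c₁.succAbove).det))) := by ring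
    _ = (-1 : R)^((r₁:ℕ)+(c₁:ℕ)) * (-1 : R)^((r₂:ℕ)+(c₂:ℕ))
        * (N.det * N.det * ((-1 : R)^((r₂:ℕ)+(c₂:ℕ)) * ((-1 : R)^((r₁:ℕ)+(c₁:ℕ))
          * (N.submatrix (r₂.succAbove ∘ ρ.succAbove) (c₂.succAbove ∘ γ.succAbove)).det))) := by
        rw [main]
    _ = ((-1 : R)^((r₁:ℕ)+(c₁:ℕ)) * (-1 : R)^((r₂:ℕ)+(c₂:ℕ))
        * ((-1 : R)^((r₁:ℕ)+(c₁:ℕ)) * (-1 : R)^((r₂:ℕ)+(c₂:ℕ))))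
        * (N.det * (N.det
          * (N.submatrix (r₂.succAbove ∘ ρ.succAbove) (c₂.succAbove ∘ γ.succAbove)).det)) := by
        ring
    _ = N.det * (N.det
        * (N.submatrix (r₂.succAbove ∘ ρ.succAbove) (c₂.succAbove ∘ γ.succAbove)).det) := by
        rw [hEE, one_mul]

lemma syl2 (N : Matrix (Fin (m+2)) (Fin (m+2)) ℝ) (r₁ r₂ c₁ c₂ : Fin (m+2))
    (hr : r₁ < r₂) (hc : c₁ < c₂) (ρ γ : Fin (m+1))
    (hρ : r₂.succAbove ρ = r₁) (hγ : c₂.succAbove γ = c₁) :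
    (N.submatrix r₁.succAbove c₁.succAbove).det * (N.submatrix r₂.succAbove c₂.succAbove).det
      - (N.submatrix r₁.succAbove c₂.succAbove).det * (N.submatrix r₂.succAbove c₁.succAbove).det
    = N.det * (N.submatrix (r₂.succAbove ∘ ρ.succAbove) (c₂.succAbove ∘ γ.succAbove)).det := by
  classical
  obtain ⟨M, hM⟩ : ∃ M : Matrix (Fin (m+2)) (Fin (m+2)) (Polynomial ℝ),
      M = Matrix.charmatrix (-N) := ⟨_, rfl⟩
  have hMdet : M.det ≠ 0 := by
    have h0 : M.det = (-N).charpoly := by rw [hM]; rfl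
    rw [h0]
    exact (Matrix.charpoly_monic _).ne_zero
  have hcancel := mul_left_cancel₀ hMdet (syl2_mul M r₁ r₂ c₁ c₂ hr hc ρ γ hρ hγ)
  set φ : Polynomial ℝ →+* ℝ := Polynomial.evalRingHom (0:ℝ) with hφ
  have hMφ : M.map φ = N := by
    ext i j
    rw [Matrix.map_apply, hM, Matrix.charmatrix_apply]
    by_cases hij : i = j
    · subst hij
      simp [Matrix.diagonal_apply_eq, hφ]
    · simp [Matrix.diagonal_apply_ne _ hij, hφ]
  have hdet : ∀ {a : ℕ} (ra : Fin a → Fin (m+2)) (ca : Fin a → Fin (m+2)),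
      φ ((M.submatrix ra ca).det) = (N.submatrix ra ca).det := by
    intro a ra ca
    rw [RingHom.map_det, RingHom.mapMatrix_apply, ← Matrix.submatrix_map, hMφ]
  have hfinal := congrArg φ hcancel
  rw [_root_.map_sub, _root_.map_mul, _root_.map_mul, _root_.map_mul,
    hdet, hdet, hdet, hdet, hdet, RingHom.map_det, RingHom.mapMatrix_apply, hMφ] at hfinal
  exact hfinal

end Sylvester


/-! ### Row/column combination determinant lemmas -/

section Comb

variable {R : Type*} [CommRing R] {n : Type*} [DecidableEq n] [Fintype n]

lemma det_updateRow_vecMul (M : Matrix n n R) (r : n → R) (i : n) :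
    (M.updateRow i (Matrix.vecMul r M)).det = r i * M.det := by
  have hv : Matrix.vecMul r M = ∑ k, r k • M k := by
    funext j
    rw [Finset.sum_apply]
    simp [Matrix.vecMul, dotProduct]
  rw [hv, Matrix.det_updateRow_sum]
  simp

lemma det_updateCol_mulVec (M : Matrix n n R) (c : n → R) (j : n) :
    (M.updateCol j (Matrix.mulVec M c)).det = c j * M.det := by
  have hv : Matrix.mulVec M c = fun k => ∑ i, c i • M k i := by
    funext k
    simp [Matrix.mulVec, dotProduct, mul_comm]
  rw [hv, Matrix.det_updateCol_sum]
  simp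

end Comb

/-! ### Dependency kills block determinants -/

section Dep

lemma det_block_zero_of_col_dep {n m k : ℕ} (A : Matrix (Fin n) (Fin n) ℝ)
    (R C : Fin m → Fin n) (g : Fin k → Fin n) (ι : Fin k → Fin m) (hι : Function.Injective ι)
    (hCι : ∀ j, C (ι j) = g j) (c : Fin k → ℝ) (hc : c ≠ 0)
    (hdep : ∀ t : Fin m, ∑ j, c j * A (R t) (g j) = 0) :
    (A.submatrix R C).det = 0 := by
  rw [← Matrix.exists_mulVec_eq_zero_iff]
  refine ⟨fun p => ∑ j, if ι j = p then c j else 0, ?_, ?_⟩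
  · obtain ⟨j₀, hj₀⟩ := Function.ne_iff.mp hc
    intro h0
    apply hj₀
    have h1 := congrFun h0 (ι j₀)
    simp only [Pi.zero_apply] at h1
    rw [Finset.sum_eq_single j₀] at h1
    · rwa [if_pos rfl] at h1
    · intro b _ hb
      rw [if_neg (fun hcon => hb (hι hcon))]
    · intro hj
      exact absurd (Finset.mem_univ j₀) hj
  · funext t
    rw [Matrix.mulVec, dotProduct]
    simp only [Matrix.submatrix_apply, Finset.mul_sum, mul_ite, mul_zero]
    rw [Finset.sum_comm]
    have : ∀ j : Fin k, (∑ p : Fin m, if ι j = p then A (R t) (C p) * c j else 0)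
        = c j * A (R t) (g j) := by
      intro j
      rw [Finset.sum_ite_eq Finset.univ (ι j) (fun p => A (R t) (C p) * c j)]
      rw [if_pos (Finset.mem_univ _), hCι]
      ring
    rw [Finset.sum_congr rfl (fun j _ => this j), hdep t]
    rfl

lemma det_block_zero_of_row_dep {n m k : ℕ} (A : Matrix (Fin n) (Fin n) ℝ)
    (R C : Fin m → Fin n) (f : Fin k → Fin n) (ι : Fin k → Fin m) (hι : Function.Injective ι)
    (hRι : ∀ i, R (ι i) = f i) (r : Fin k → ℝ) (hr : r ≠ 0)
    (hdep : ∀ t : Fin m, ∑ i, r i * A (f i) (C t) = 0) :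
    (A.submatrix R C).det = 0 := by
  rw [← Matrix.exists_vecMul_eq_zero_iff]
  refine ⟨fun p => ∑ i, if ι i = p then r i else 0, ?_, ?_⟩
  · obtain ⟨i₀, hi₀⟩ := Function.ne_iff.mp hr
    intro h0
    apply hi₀
    have h1 := congrFun h0 (ι i₀)
    simp only [Pi.zero_apply] at h1
    rw [Finset.sum_eq_single i₀] at h1
    · rwa [if_pos rfl] at h1
    · intro b _ hb
      rw [if_neg (fun hcon => hb (hι hcon))]
    · intro hj
      exact absurd (Finset.mem_univ i₀) hj
  · funext t
    rw [Matrix.vecMul, dotProduct]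
    simp only [Matrix.submatrix_apply, Finset.sum_mul, ite_mul, zero_mul]
    rw [Finset.sum_comm]
    have : ∀ i : Fin k, (∑ p : Fin m, if ι i = p then r i * A (R p) (C t) else 0)
        = r i * A (f i) (C t) := by
      intro i
      rw [Finset.sum_ite_eq Finset.univ (ι i) (fun p => r i * A (R p) (C t))]
      rw [if_pos (Finset.mem_univ _), hRι]
    rw [Finset.sum_congr rfl (fun i _ => this i), hdep t]
    rfl

end Dep

/-! ### Nonvanishing of bordered minors from kernel structure -/

section Kernel

lemma minor_ne_zero_row {n k' : ℕ} (A : Matrix (Fin n) (Fin n) ℝ)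
    (hsmall : ∀ r c : Fin k' → Fin n, StrictMono r → StrictMono c → 0 < (A.submatrix r c).det)
    (f : Fin (k'+1) → Fin n) (hf : StrictMono f)
    (C : Fin (k'+1) → Fin n) (hC : StrictMono C)
    (r : Fin (k'+1) → ℝ) (i₀ : Fin (k'+1)) (hr0 : r i₀ ≠ 0)
    (ypos : Fin (k'+1)) (ey : ℝ) (hey : ey ≠ 0)
    (hker : ∀ l, (∑ i, r i * A (f i) (C l)) = if l = ypos then ey else 0) :
    (A.submatrix f C).det ≠ 0 := by
  intro h0
  have hvm : Matrix.vecMul r (A.submatrix f C) = Pi.single ypos ey := by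
    funext l
    rw [Pi.single_apply]
    rw [show Matrix.vecMul r (A.submatrix f C) l = ∑ i, r i * A (f i) (C l) from by
      rw [Matrix.vecMul, dotProduct]
      simp [Matrix.submatrix_apply]]
    exact hker l
  have h1 : ((A.submatrix f C).updateRow i₀ (Matrix.vecMul r (A.submatrix f C))).det
      = r i₀ * (A.submatrix f C).det := det_updateRow_vecMul _ _ _
  rw [hvm, det_updateRow_single, h0, mul_zero] at h1
  rw [Matrix.submatrix_submatrix] at h1
  have hpos := hsmall (f ∘ i₀.succAbove) (C ∘ ypos.succAbove)
    (hf.comp (Fin.strictMono_succAbove i₀)) (hC.comp (Fin.strictMono_succAbove ypos))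
  have hsgn : ((-1:ℝ))^((i₀:ℕ)+(ypos:ℕ)) ≠ 0 := pow_ne_zero _ (by norm_num)
  exact (mul_ne_zero (mul_ne_zero hey hsgn) (ne_of_gt hpos)) h1

lemma minor_ne_zero_col {n k' : ℕ} (A : Matrix (Fin n) (Fin n) ℝ)
    (hsmall : ∀ r c : Fin k' → Fin n, StrictMono r → StrictMono c → 0 < (A.submatrix r c).det)
    (Rr : Fin (k'+1) → Fin n) (hR : StrictMono Rr)
    (g : Fin (k'+1) → Fin n) (hg : StrictMono g)
    (c : Fin (k'+1) → ℝ) (j₀ : Fin (k'+1)) (hc0 : c j₀ ≠ 0)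
    (xpos : Fin (k'+1)) (dx : ℝ) (hdx : dx ≠ 0)
    (hker : ∀ l, (∑ j, c j * A (Rr l) (g j)) = if l = xpos then dx else 0) :
    (A.submatrix Rr g).det ≠ 0 := by
  intro h0
  have hvm : Matrix.mulVec (A.submatrix Rr g) c = Pi.single xpos dx := by
    funext l
    rw [Pi.single_apply]
    rw [show Matrix.mulVec (A.submatrix Rr g) c l = ∑ j, c j * A (Rr l) (g j) from by
      rw [Matrix.mulVec, dotProduct]
      simp [Matrix.submatrix_apply, mul_comm]]
    exact hker l
  have h1 : ((A.submatrix Rr g).updateCol j₀ (Matrix.mulVec (A.submatrix Rr g) c)).det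
      = c j₀ * (A.submatrix Rr g).det := det_updateCol_mulVec _ _ _
  rw [hvm, det_updateColumn_single, h0, mul_zero] at h1
  rw [Matrix.submatrix_submatrix] at h1
  have hpos := hsmall (Rr ∘ xpos.succAbove) (g ∘ j₀.succAbove)
    (hR.comp (Fin.strictMono_succAbove xpos)) (hg.comp (Fin.strictMono_succAbove j₀))
  have hsgn : ((-1:ℝ))^((xpos:ℕ)+(j₀:ℕ)) ≠ 0 := pow_ne_zero _ (by norm_num)
  exact (mul_ne_zero (mul_ne_zero hdx hsgn) (ne_of_gt hpos)) h1

end Kernel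


/-! ### Zero minors propagate -/

section ZProp

lemma zprop {n k' : ℕ} (A : Matrix (Fin n) (Fin n) ℝ)
    (hTN1 : ∀ (r c : Fin (k'+1) → Fin n), StrictMono r → StrictMono c →
      0 ≤ (A.submatrix r c).det)
    (hTN2 : ∀ (r c : Fin (k'+2) → Fin n), StrictMono r → StrictMono c →
      0 ≤ (A.submatrix r c).det)
    (hsmall : ∀ r c : Fin k' → Fin n, StrictMono r → StrictMono c → 0 < (A.submatrix r c).det)
    (f g : Fin (k'+1) → Fin n) (hf : StrictMono f) (hg : StrictMono g)
    (hdet : (A.submatrix f g).det = 0)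
    (c r : Fin (k'+1) → ℝ) (hc : c ≠ 0) (hr : r ≠ 0)
    (hcker : ∀ i, ∑ j, c j * A (f i) (g j) = 0)
    (hrker : ∀ j, ∑ i, r i * A (f i) (g j) = 0)
    {x y : Fin n} (hx : x ∉ Set.range f) (hy : y ∉ Set.range g)
    (hdx : ∑ j, c j * A x (g j) ≠ 0) (hey : ∑ i, r i * A (f i) y ≠ 0)
    {i j : Fin (k'+1)} (hor : (f i < x ∧ g j < y) ∨ (x < f i ∧ y < g j)) : False := by
  classical
  obtain ⟨F, p, hF, hFp, hFcomp⟩ := exists_insert hf hx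
  obtain ⟨G, q, hG, hGq, hGcomp⟩ := exists_insert hg hy
  have hpi : F (p.succAbove i) = f i := by rw [← hFcomp]; rfl
  have hqj : G (q.succAbove j) = g j := by rw [← hGcomp]; rfl
  obtain ⟨i₀, hi₀⟩ := Function.ne_iff.mp hr
  obtain ⟨j₀, hj₀⟩ := Function.ne_iff.mp hc
  -- the column y sits inside G ∘ (q.succAbove j).succAbove
  obtain ⟨ypos, hypos⟩ := Fin.exists_succAbove_eq
    (show q ≠ q.succAbove j from (Fin.succAbove_ne q j).symm)
  obtain ⟨xpos, hxpos⟩ := Fin.exists_succAbove_eq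
    (show p ≠ p.succAbove i from (Fin.succAbove_ne p i).symm)
  -- μ : minor with rows f, cols (g with g j replaced by y)
  have hμne : (A.submatrix f (G ∘ (q.succAbove j).succAbove)).det ≠ 0 := by
    apply minor_ne_zero_row A hsmall f hf _ (hG.comp (Fin.strictMono_succAbove _)) r i₀ hi₀
      ypos (∑ i', r i' * A (f i') y) hey
    intro l
    by_cases hl : l = ypos
    · subst hl
      rw [if_pos rfl]
      simp only [Function.comp_apply, hypos, hGq]
    · rw [if_neg hl]
      have ht : (q.succAbove j).succAbove l ≠ q := by
        intro hcon
        exact hl (Fin.succAbove_right_injective (hcon.trans hypos.symm))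
      obtain ⟨s, hs⟩ := Fin.exists_succAbove_eq ht
      have : G ((q.succAbove j).succAbove l) = g s := by
        rw [← hs, ← hGcomp]; rfl
      simp only [Function.comp_apply, this]
      exact hrker s
  have hμpos : 0 < (A.submatrix f (G ∘ (q.succAbove j).succAbove)).det :=
    lt_of_le_of_ne (hTN1 _ _ hf (hG.comp (Fin.strictMono_succAbove _))) (Ne.symm hμne)
  -- ν : minor with rows (f with f i replaced by x), cols g
  have hνne : (A.submatrix (F ∘ (p.succAbove i).succAbove) g).det ≠ 0 := by
    apply minor_ne_zero_col A hsmall _ (hF.comp (Fin.strictMono_succAbove _)) g hg c j₀ hj₀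
      xpos (∑ j', c j' * A x (g j')) hdx
    intro l
    by_cases hl : l = xpos
    · subst hl
      rw [if_pos rfl]
      simp only [Function.comp_apply, hxpos, hFp]
    · rw [if_neg hl]
      have ht : (p.succAbove i).succAbove l ≠ p := by
        intro hcon
        exact hl (Fin.succAbove_right_injective (hcon.trans hxpos.symm))
      obtain ⟨s, hs⟩ := Fin.exists_succAbove_eq ht
      have : F ((p.succAbove i).succAbove l) = f s := by
        rw [← hs, ← hFcomp]; rfl
      simp only [Function.comp_apply, this]
      exact hcker s
  have hνpos : 0 < (A.submatrix (F ∘ (p.succAbove i).succAbove) g).det :=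
    lt_of_le_of_ne (hTN1 _ _ (hF.comp (Fin.strictMono_succAbove _)) hg) (Ne.symm hνne)
  have hdetN : 0 ≤ (A.submatrix F G).det := hTN2 F G hF hG
  rcases hor with ⟨hor1, hor2⟩ | ⟨hor1, hor2⟩
  · -- f i < x, g j < y : distinguished rows (p.succAbove i, p), cols (q.succAbove j, q)
    have hplt : p.succAbove i < p := by
      rw [← hF.lt_iff_lt, hpi, hFp]
      exact hor1
    have hqlt : q.succAbove j < q := by
      rw [← hG.lt_iff_lt, hqj, hGq]
      exact hor2
    obtain ⟨ρ, hρ⟩ := Fin.exists_succAbove_eq (Fin.succAbove_ne p i)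
    obtain ⟨γ, hγ⟩ := Fin.exists_succAbove_eq (Fin.succAbove_ne q j)
    have hid := syl2 (A.submatrix F G) (p.succAbove i) p (q.succAbove j) q hplt hqlt ρ γ hρ hγ
    rw [Matrix.submatrix_submatrix, Matrix.submatrix_submatrix, Matrix.submatrix_submatrix,
      Matrix.submatrix_submatrix, Matrix.submatrix_submatrix, hFcomp, hGcomp] at hid
    rw [hdet, mul_zero, zero_sub] at hid
    have hinner : 0 < (A.submatrix (F ∘ (p.succAbove ∘ ρ.succAbove))
        (G ∘ (q.succAbove ∘ γ.succAbove))).det := by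
      apply hsmall
      · exact hF.comp ((Fin.strictMono_succAbove p).comp (Fin.strictMono_succAbove ρ))
      · exact hG.comp ((Fin.strictMono_succAbove q).comp (Fin.strictMono_succAbove γ))
    nlinarith [mul_pos hνpos hμpos, mul_nonneg hdetN (le_of_lt hinner)]
  · -- x < f i, y < g j : distinguished rows (p, p.succAbove i), cols (q, q.succAbove j)
    have hplt : p < p.succAbove i := by
      rw [← hF.lt_iff_lt, hpi, hFp]
      exact hor1
    have hqlt : q < q.succAbove j := by
      rw [← hG.lt_iff_lt, hqj, hGq]
      exact hor2
    obtain ⟨ρ, hρ⟩ := Fin.exists_succAbove_eq (Ne.symm (Fin.succAbove_ne p i))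
    obtain ⟨γ, hγ⟩ := Fin.exists_succAbove_eq (Ne.symm (Fin.succAbove_ne q j))
    have hid := syl2 (A.submatrix F G) p (p.succAbove i) q (q.succAbove j) hplt hqlt ρ γ hρ hγ
    rw [Matrix.submatrix_submatrix, Matrix.submatrix_submatrix, Matrix.submatrix_submatrix,
      Matrix.submatrix_submatrix, Matrix.submatrix_submatrix, hFcomp, hGcomp] at hid
    rw [hdet, zero_mul, zero_sub] at hid
    have hinner : 0 < (A.submatrix (F ∘ ((p.succAbove i).succAbove ∘ ρ.succAbove))
        (G ∘ ((q.succAbove j).succAbove ∘ γ.succAbove))).det := by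
      apply hsmall
      · exact hF.comp ((Fin.strictMono_succAbove _).comp (Fin.strictMono_succAbove ρ))
      · exact hG.comp ((Fin.strictMono_succAbove _).comp (Fin.strictMono_succAbove γ))
    nlinarith [mul_pos hμpos hνpos, mul_nonneg hdetN (le_of_lt hinner)]

end ZProp


/-! ### Main lemma : no zero minors -/

section Main

lemma no_zero_minor {n k' : ℕ} (A : Matrix (Fin n) (Fin n) ℝ)
    (hTN : ∀ (k : ℕ) (r c : Fin k → Fin n), StrictMono r → StrictMono c →
      0 ≤ (A.submatrix r c).det)
    (hcorner : ∀ (j : ℕ) (hj : j ≤ n), 1 ≤ j →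
      0 < (A.submatrix (fun t : Fin j => (⟨n - j + t.val, by have := t.isLt; omega⟩ : Fin n))
            (fun t : Fin j => (⟨t.val, by have := t.isLt; omega⟩ : Fin n))).det
      ∧ 0 < (A.submatrix (fun t : Fin j => (⟨t.val, by have := t.isLt; omega⟩ : Fin n))
            (fun t : Fin j => (⟨n - j + t.val, by have := t.isLt; omega⟩ : Fin n))).det)
    (hsmall : ∀ (r c : Fin k' → Fin n), StrictMono r → StrictMono c →
      0 < (A.submatrix r c).det)
    (f g : Fin (k'+1) → Fin n) (hf : StrictMono f) (hg : StrictMono g)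
    (hdet : (A.submatrix f g).det = 0) : False := by
  classical
  obtain ⟨c, hc, hcker0⟩ := Matrix.exists_mulVec_eq_zero_iff.mpr hdet
  obtain ⟨r, hr, hrker0⟩ := Matrix.exists_vecMul_eq_zero_iff.mpr hdet
  have hcker : ∀ i, ∑ j, c j * A (f i) (g j) = 0 := by
    intro i
    have h1 := congrFun hcker0 i
    rw [Matrix.mulVec, dotProduct] at h1
    simp only [Matrix.submatrix_apply, Pi.zero_apply] at h1
    rw [← h1]
    exact Finset.sum_congr rfl (fun j _ => mul_comm _ _)
  have hrker : ∀ jj, ∑ i, r i * A (f i) (g jj) = 0 := by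
    intro jj
    have h1 := congrFun hrker0 jj
    rw [Matrix.vecMul, dotProduct] at h1
    simp only [Matrix.submatrix_apply, Pi.zero_apply] at h1
    exact h1
  set d : Fin n → ℝ := fun x => ∑ j, c j * A x (g j) with hd
  set e : Fin n → ℝ := fun y => ∑ i, r i * A (f i) y with he
  have hdf : ∀ i, d (f i) = 0 := hcker
  have heg : ∀ jj, e (g jj) = 0 := hrker
  have hn1 : 1 ≤ n := by
    have := (f 0).isLt
    omega
  -- corner killers
  have kill_ll_col : ∀ (m : ℕ) (h1 : 1 ≤ m) (hm : m ≤ n),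
      (∀ jj, (g jj).val < m) →
      (∀ t : Fin m, d ⟨n - m + t.val, by have := t.isLt; omega⟩ = 0) → False := by
    intro m h1 hm hglt hdep
    have h0 : (A.submatrix
        (fun t : Fin m => (⟨n - m + t.val, by have := t.isLt; omega⟩ : Fin n))
        (fun t : Fin m => (⟨t.val, by have := t.isLt; omega⟩ : Fin n))).det = 0 := by
      apply det_block_zero_of_col_dep A _ _ g (fun jj => (⟨(g jj).val, hglt jj⟩ : Fin m))
        (fun a b hab => hg.injective (Fin.ext (by
          have h2 := congrArg Fin.val hab
          simpa using h2))) _ c hc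
      · intro t
        exact hdep t
      · intro jj
        exact Fin.ext rfl
    exact absurd h0 (ne_of_gt ((hcorner m hm h1).1))
  have kill_ll_row : ∀ (m : ℕ) (h1 : 1 ≤ m) (hm : m ≤ n),
      (∀ i, n - m ≤ (f i).val) →
      (∀ t : Fin m, e ⟨t.val, by have := t.isLt; omega⟩ = 0) → False := by
    intro m h1 hm hfge hdep
    have h0 : (A.submatrix
        (fun t : Fin m => (⟨n - m + t.val, by have := t.isLt; omega⟩ : Fin n))
        (fun t : Fin m => (⟨t.val, by have := t.isLt; omega⟩ : Fin n))).det = 0 := by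
      apply det_block_zero_of_row_dep A _ _ f
        (fun i => (⟨(f i).val - (n - m), by have := (f i).isLt; omega⟩ : Fin m))
        (fun a b hab => by
          apply hf.injective
          apply Fin.ext
          have h2 := congrArg Fin.val hab
          simp only at h2
          have := hfge a
          have := hfge b
          omega) _ r hr
      · intro t
        exact hdep t
      · intro i
        apply Fin.ext
        simp only
        have := hfge i
        omega
    exact absurd h0 (ne_of_gt ((hcorner m hm h1).1))
  have kill_ur_row : ∀ (m : ℕ) (h1 : 1 ≤ m) (hm : m ≤ n),
      (∀ i, (f i).val < m) →
      (∀ t : Fin m, e ⟨n - m + t.val, by have := t.isLt; omega⟩ = 0) → False := by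
    intro m h1 hm hflt hdep
    have h0 : (A.submatrix
        (fun t : Fin m => (⟨t.val, by have := t.isLt; omega⟩ : Fin n))
        (fun t : Fin m => (⟨n - m + t.val, by have := t.isLt; omega⟩ : Fin n))).det = 0 := by
      apply det_block_zero_of_row_dep A _ _ f (fun i => (⟨(f i).val, hflt i⟩ : Fin m))
        (fun a b hab => hf.injective (Fin.ext (by
          have h2 := congrArg Fin.val hab
          simpa using h2))) _ r hr
      · intro t
        exact hdep t
      · intro i
        exact Fin.ext rfl
    exact absurd h0 (ne_of_gt ((hcorner m hm h1).2))
  have kill_ur_col : ∀ (m : ℕ) (h1 : 1 ≤ m) (hm : m ≤ n),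
      (∀ jj, n - m ≤ (g jj).val) →
      (∀ t : Fin m, d ⟨t.val, by have := t.isLt; omega⟩ = 0) → False := by
    intro m h1 hm hgge hdep
    have h0 : (A.submatrix
        (fun t : Fin m => (⟨t.val, by have := t.isLt; omega⟩ : Fin n))
        (fun t : Fin m => (⟨n - m + t.val, by have := t.isLt; omega⟩ : Fin n))).det = 0 := by
      apply det_block_zero_of_col_dep A _ _ g
        (fun jj => (⟨(g jj).val - (n - m), by have := (g jj).isLt; omega⟩ : Fin m))
        (fun a b hab => by
          apply hg.injective
          apply Fin.ext
          have h2 := congrArg Fin.val hab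
          simp only at h2
          have := hgge a
          have := hgge b
          omega) _ c hc
      · intro t
        exact hdep t
      · intro jj
        apply Fin.ext
        simp only
        have := hgge jj
        omega
    exact absurd h0 (ne_of_gt ((hcorner m hm h1).2))
  by_cases hA : ∀ x : Fin n, x ∉ Set.range f → d x = 0
  · have hall : ∀ x, d x = 0 := by
      intro x
      by_cases hx : x ∈ Set.range f
      · obtain ⟨i, rfl⟩ := hx
        exact hdf i
      · exact hA x hx
    have hgn := (g (Fin.last k')).isLt
    exact kill_ll_col ((g (Fin.last k')).val + 1) (by omega) (by omega)
      (fun jj => by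
        have := hg.monotone (Fin.le_last jj)
        rw [Fin.le_def] at this
        omega)
      (fun t => hall _)
  by_cases hB : ∀ y : Fin n, y ∉ Set.range g → e y = 0
  · have hall : ∀ y, e y = 0 := by
      intro y
      by_cases hy : y ∈ Set.range g
      · obtain ⟨jj, rfl⟩ := hy
        exact heg jj
      · exact hB y hy
    have hfn := (f (Fin.last k')).isLt
    exact kill_ur_row ((f (Fin.last k')).val + 1) (by omega) (by omega)
      (fun i => by
        have := hf.monotone (Fin.le_last i)
        rw [Fin.le_def] at this
        omega)
      (fun t => hall _)
  push_neg at hA hB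
  obtain ⟨x₀, hx₀, hdx₀⟩ := hA
  obtain ⟨y₀, hy₀, hey₀⟩ := hB
  have AO : ∀ (x y : Fin n), x ∉ Set.range f → y ∉ Set.range g → d x ≠ 0 → e y ≠ 0 →
      ∀ i j, ¬((f i < x ∧ g j < y) ∨ (x < f i ∧ y < g j)) := by
    intro x y hx hy hdx hey i j hcon
    exact zprop A (fun rr cc h1 h2 => hTN _ rr cc h1 h2) (fun rr cc h1 h2 => hTN _ rr cc h1 h2)
      hsmall f g hf hg hdet c r hc hr hcker hrker hx hy hdx hey hcon
  have tri : ∀ (x : Fin n), x ∉ Set.range f → ∀ i, f i < x ∨ x < f i := by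
    intro x hx i
    rcases lt_trichotomy (f i) x with h|h|h
    · exact Or.inl h
    · exact absurd ⟨i, h⟩ hx
    · exact Or.inr h
  have trig : ∀ (y : Fin n), y ∉ Set.range g → ∀ jj, g jj < y ∨ y < g jj := by
    intro y hy jj
    rcases lt_trichotomy (g jj) y with h|h|h
    · exact Or.inl h
    · exact absurd ⟨jj, h⟩ hy
    · exact Or.inr h
  by_cases hC1 : ∃ i₁, f i₁ < x₀
  · obtain ⟨i₁, hi₁⟩ := hC1
    have hgy₀ : ∀ jj, y₀ < g jj := by
      intro jj
      rcases trig y₀ hy₀ jj with h|h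
      · exact absurd (Or.inl ⟨hi₁, h⟩) (AO x₀ y₀ hx₀ hy₀ hdx₀ hey₀ i₁ jj)
      · exact h
    have hfx₀ : ∀ i, f i < x₀ := by
      intro i
      rcases tri x₀ hx₀ i with h|h
      · exact h
      · exact absurd (Or.inr ⟨h, hgy₀ 0⟩) (AO x₀ y₀ hx₀ hy₀ hdx₀ hey₀ i 0)
    have hdall : ∀ x : Fin n, x ≤ f (Fin.last k') → d x = 0 := by
      intro x hxle
      by_cases hxr : x ∈ Set.range f
      · obtain ⟨i, rfl⟩ := hxr
        exact hdf i
      · by_contra hdx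
        have hlt : x < f (Fin.last k') :=
          lt_of_le_of_ne hxle (fun hcon => hxr ⟨_, hcon.symm⟩)
        exact AO x y₀ hxr hy₀ hdx hey₀ (Fin.last k') 0 (Or.inr ⟨hlt, hgy₀ 0⟩)
    have heall : ∀ y : Fin n, g 0 ≤ y → e y = 0 := by
      intro y hyge
      by_cases hyr : y ∈ Set.range g
      · obtain ⟨jj, rfl⟩ := hyr
        exact heg jj
      · by_contra hey
        have hlt : g 0 < y := lt_of_le_of_ne hyge (fun hcon => hyr ⟨_, hcon⟩)
        exact AO x₀ y hx₀ hyr hdx₀ hey 0 0 (Or.inl ⟨hfx₀ 0, hlt⟩)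
    have hb1 : 1 ≤ (g 0).val := by
      have := hgy₀ 0
      rw [Fin.lt_def] at this
      omega
    have han : (f (Fin.last k')).val < n := (f (Fin.last k')).isLt
    by_cases hab : (f (Fin.last k')).val + 1 + (g 0).val ≤ n
    · exact kill_ur_row ((f (Fin.last k')).val + 1) (by omega) (by omega)
        (fun i => by
          have := hf.monotone (Fin.le_last i)
          rw [Fin.le_def] at this
          omega)
        (fun t => heall _ (by
          rw [Fin.le_def]
          simp only
          have := t.isLt
          omega))
    · have hbn : (g 0).val < n := (g 0).isLt
      exact kill_ur_col (n - (g 0).val) (by omega) (by omega)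
        (fun jj => by
          have := hg.monotone (Fin.zero_le jj)
          rw [Fin.le_def] at this
          omega)
        (fun t => hdall _ (by
          rw [Fin.le_def]
          simp only
          have := t.isLt
          omega))
  · have hxf : ∀ i, x₀ < f i := by
      intro i
      rcases tri x₀ hx₀ i with h|h
      · exact absurd ⟨i, h⟩ hC1
      · exact h
    have hgy₀ : ∀ jj, g jj < y₀ := by
      intro jj
      rcases trig y₀ hy₀ jj with h|h
      · exact h
      · exact absurd (Or.inr ⟨hxf 0, h⟩) (AO x₀ y₀ hx₀ hy₀ hdx₀ hey₀ 0 jj)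
    have hdall : ∀ x : Fin n, f 0 ≤ x → d x = 0 := by
      intro x hxge
      by_cases hxr : x ∈ Set.range f
      · obtain ⟨i, rfl⟩ := hxr
        exact hdf i
      · by_contra hdx
        have hlt : f 0 < x := lt_of_le_of_ne hxge (fun hcon => hxr ⟨_, hcon⟩)
        exact AO x y₀ hxr hy₀ hdx hey₀ 0 0 (Or.inl ⟨hlt, hgy₀ 0⟩)
    have heall : ∀ y : Fin n, y ≤ g (Fin.last k') → e y = 0 := by
      intro y hyle
      by_cases hyr : y ∈ Set.range g
      · obtain ⟨jj, rfl⟩ := hyr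
        exact heg jj
      · by_contra hey
        have hlt : y < g (Fin.last k') :=
          lt_of_le_of_ne hyle (fun hcon => hyr ⟨_, hcon.symm⟩)
        exact AO x₀ y hx₀ hyr hdx₀ hey 0 (Fin.last k') (Or.inr ⟨hxf 0, hlt⟩)
    have ha1 : 1 ≤ (f 0).val := by
      have := hxf 0
      rw [Fin.lt_def] at this
      omega
    have hbn : (g (Fin.last k')).val < n := (g (Fin.last k')).isLt
    by_cases hab : (g (Fin.last k')).val + 1 + (f 0).val ≤ n
    · exact kill_ll_col ((g (Fin.last k')).val + 1) (by omega) (by omega)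
        (fun jj => by
          have := hg.monotone (Fin.le_last jj)
          rw [Fin.le_def] at this
          omega)
        (fun t => hdall _ (by
          rw [Fin.le_def]
          simp only
          have := t.isLt
          omega))
    · have hfn : (f 0).val < n := (f 0).isLt
      exact kill_ll_row (n - (f 0).val) (by omega) (by omega)
        (fun i => by
          have := hf.monotone (Fin.zero_le i)
          rw [Fin.le_def] at this
          omega)
        (fun t => heall _ (by
          rw [Fin.le_def]
          simp only
          have := t.isLt
          omega))

end Main

end TPAux

theorem stmt9 {n : ℕ} (A : Matrix (Fin n) (Fin n) ℝ) (hTN : TotallyNonneg A) :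
    TotallyPos A ↔
      ∀ (j : ℕ) (hj : j ≤ n), 1 ≤ j → 0 < llMinor A j hj ∧ 0 < urMinor A j hj := by
  constructor
  · intro hTP j hj h1j
    constructor
    · exact hTP j _ _
        (fun a b hab => by
          rw [Fin.lt_def] at hab ⊢
          simp only
          omega)
        (fun a b hab => by
          rw [Fin.lt_def] at hab ⊢
          simp only
          exact hab)
    · exact hTP j _ _
        (fun a b hab => by
          rw [Fin.lt_def] at hab ⊢
          simp only
          exact hab)
        (fun a b hab => by
          rw [Fin.lt_def] at hab ⊢
          simp only
          omega)
  · intro hcorner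
    intro k
    induction k using Nat.strong_induction_on with
    | _ k IH =>
      intro r c hr hc
      rcases Nat.eq_zero_or_pos k with hk0 | hkpos
      · subst hk0
        simp [Matrix.det_fin_zero]
      · obtain ⟨k', rfl⟩ : ∃ k', k = k' + 1 := ⟨k - 1, by omega⟩
        by_contra hnp
        have h0 : (A.submatrix r c).det = 0 :=
          le_antisymm (not_lt.mp hnp) (hTN _ r c hr hc)
        exact TPAux.no_zero_minor A hTN
          (fun j hj h1 => ⟨(hcorner j hj h1).1, (hcorner j hj h1).2⟩)
          (fun rr cc h1 h2 => IH k' (by omega) rr cc h1 h2) r c hr hc h0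
end

section
/- Let L := W_2(ℓ^2) W_3(ℓ^3) ⋯ W_s(ℓ^s), where W_i(ℓ^i) := L_n(ℓ^i_1) L_{n−1}(ℓ^i_2) ⋯ L_i(ℓ^i_{n−i+1}) with all multipliers positive, and let A := L D L^T for a positive diagonal matrix D. Then A is oscillatory and its exponent is r(A) = ⌈(n−1)/(s−1)⌉. -/
/-- The lower elementary bidiagonal matrix L_i(q) = I + q·E_{i,i−1} (1-indexed i). -/
def Lmat (n i : ℕ) (q : ℝ) : Matrix (Fin n) (Fin n) ℝ :=
  1 + Matrix.of fun a b : Fin n => if a.val + 1 = i ∧ b.val + 2 = i then q else 0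

/-- W_i(v) := L_n(v 0) · L_{n−1}(v 1) ⋯ L_i(v (n−i)). -/
def Wmat (n i : ℕ) (v : ℕ → ℝ) : Matrix (Fin n) (Fin n) ℝ :=
  (List.ofFn fun j : Fin (n - i + 1) => Lmat n (n - j.val) (v j.val)).prod

/-!
Write `A ^ r` as a word in the factors `L_i(q)`, `L_i(q)ᵀ` and `D`. Left multiplication by
`L_i(q)` adds `q` times row `i - 2` to row `i - 1` (rows numbered from `0`), so by multilinearity
of the determinant a minor of such a product with positive parameters is a sum of nonnegative
terms, and it is positive exactly when its row set can be carried to its column set by the row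
exchanges the factors offer, read from the left (Lindström's lemma for the planar network of the
word). This gives total nonnegativity and turns total positivity of `A ^ r` into a reachability
question.

A sweep `W_i = L_n ⋯ L_i` can slide one row down as far as row `i - 2`, and `W_iᵀ` slides one
row up. Moving the rows that must go down starting from the lowest, and those that must go up
starting from the highest, each factor `L D Lᵀ` settles up to `s - 1` rows of each kind; at most
`n - 1` rows move each way, so `r (s - 1) ≥ n - 1` suffices. Conversely, in the minor with rows
`{1, …, n - 1}` and columns `{0, …, n - 2}` the missing row rises by at most one per sweep of `L`
and never under `Lᵀ`, so a positive minor forces `r (s - 1) ≥ n - 1`.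
-/

section General

open Function Set Matrix

lemma Fin.val_le_of_strictMono {k n : ℕ} {f : Fin k → Fin n} (hf : StrictMono f) (t : Fin k) :
    (t : ℕ) ≤ f t := by
  obtain ⟨j, hj⟩ := t
  induction j with
  | zero => exact Nat.zero_le _
  | succ j ih =>
    have := hf (show (⟨j, by omega⟩ : Fin k) < ⟨j + 1, hj⟩ from Fin.lt_def.mpr (Nat.lt_succ_self j))
    have := ih (by omega)
    rw [Fin.lt_def] at *
    simp only at *
    omega

lemma StrictMono.update {α β : Type*} [LinearOrder α] [Preorder β] [DecidableEq α] {r : α → β}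
    (hr : StrictMono r) {t : α} {v : β} (hlt : ∀ t' < t, r t' < v)
    (hgt : ∀ t', t < t' → v < r t') : StrictMono (update r t v) := by
  intro a b hab
  by_cases ha : a = t
  · subst ha
    simp [hab.ne', hgt b hab]
  · by_cases hb : b = t
    · subst hb
      simp [ha, hlt a hab]
    · simp [ha, hb, hr hab]

lemma Set.range_update_of_injective {ι β : Type*} [DecidableEq ι] {r : ι → β}
    (hr : Injective r) (t : ι) (v : β) : range (update r t v) = insert v (range r \ {r t}) := by
  ext z
  simp only [mem_range, mem_insert_iff, mem_sdiff, mem_singleton_iff]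
  constructor
  · rintro ⟨t', rfl⟩
    by_cases h : t' = t
    · subst h; simp
    · simp only [update_of_ne h]
      exact Or.inr ⟨⟨t', rfl⟩, hr.ne h⟩
  · rintro (rfl | ⟨⟨t', rfl⟩, hne⟩)
    · exact ⟨t, update_self t _ r⟩
    · have h : t' ≠ t := fun h => hne (h ▸ rfl)
      exact ⟨t', update_of_ne h _ _⟩

lemma Matrix.submatrix_updateRow_apply_self {ι m o κ α : Type*} [DecidableEq ι] [DecidableEq m]
    (B : Matrix m o α) {r : ι → m} (hr : Injective r) (c : κ → o) (t : ι) (v : o → α) :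
    (B.updateRow (r t) v).submatrix r c = (B.submatrix r c).updateRow t (v ∘ c) := by
  ext t' j
  by_cases h : t' = t
  · subst h; simp
  · simp [h, hr.ne h]

lemma Matrix.submatrix_updateRow_of_notMem_range {ι m o κ α : Type*} [DecidableEq m]
    (B : Matrix m o α) {r : ι → m} (c : κ → o) {x : m} (hx : x ∉ range r) (v : o → α) :
    (B.updateRow x v).submatrix r c = B.submatrix r c := by
  ext t j
  have : r t ≠ x := fun h => hx ⟨t, h⟩
  simp [this]

lemma Matrix.one_add_single_mul {m R : Type*} [Fintype m] [DecidableEq m] [Ring R] (x y : m)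
    (q : R) (B : Matrix m m R) : (1 + single x y q) * B = B.updateRow x (B x + q • B y) := by
  ext a b
  by_cases ha : a = x
  · subst ha
    simp [Matrix.add_mul]
  · simp [Matrix.add_mul, ha]

section Minors

variable {R m o ι : Type*} [CommRing R] [DecidableEq m] [Fintype ι] [DecidableEq ι]

lemma Matrix.det_submatrix_updateRow_add_of_mem_range (B : Matrix m o R) {r : ι → m}
    (c : ι → o) {x y : m} (q : R) (hr : Injective r) (hxy : x ≠ y)
    (h : x ∈ range r → y ∈ range r) :
    det ((B.updateRow x (B x + q • B y)).submatrix r c) = det (B.submatrix r c) := by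
  by_cases hx : x ∈ range r
  · obtain ⟨t, rfl⟩ := hx
    obtain ⟨t', rfl⟩ := h ⟨t, rfl⟩
    have htt' : t ≠ t' := fun h' => hxy (h' ▸ rfl)
    rw [submatrix_updateRow_apply_self B hr]
    exact det_updateRow_add_smul_self _ htt' q
  · rw [submatrix_updateRow_of_notMem_range B c hx]

lemma Matrix.det_submatrix_updateRow_add_self (B : Matrix m o R) {r : ι → m} (c : ι → o)
    {y : m} (q : R) (hr : Injective r) (t : ι) :
    det ((B.updateRow (r t) (B (r t) + q • B y)).submatrix r c)
      = det (B.submatrix r c) + q * det (B.submatrix (update r t y) c) := by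
  have hself : (B.submatrix r c).updateRow t (B (r t) ∘ c) = B.submatrix r c :=
    updateRow_eq_self _ t
  have hnew : (B.submatrix r c).updateRow t (B y ∘ c) = B.submatrix (update r t y) c := by
    ext t' j
    by_cases h : t' = t
    · subst h; simp
    · simp [h]
  rw [submatrix_updateRow_apply_self B hr, Pi.add_comp, Pi.smul_comp, det_updateRow_add,
    det_updateRow_smul, hself, hnew]

lemma Matrix.det_submatrix_diagonal_mul [Fintype m] (d : m → R) (B : Matrix m m R)
    (r c : ι → m) :
    det ((diagonal d * B).submatrix r c) = (∏ t, d (r t)) * det (B.submatrix r c) := by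
  rw [← det_mul_column]
  congr 1
  ext t j
  simp [diagonal_mul]

lemma Matrix.det_one_submatrix [LinearOrder m] {k : ℕ} {r c : Fin k → m} (hr : StrictMono r)
    (hc : StrictMono c) :
    det ((1 : Matrix m m R).submatrix r c) = if range r = range c then 1 else 0 := by
  split_ifs with h
  · rw [(hr.range_inj hc).mp h, submatrix_one _ hc.injective, det_one]
  · obtain ⟨x, hx⟩ | ⟨x, hx⟩ :
        (∃ x, x ∈ range r ∧ x ∉ range c) ∨ (∃ x, x ∈ range c ∧ x ∉ range r) := by
      by_contra! h'
      exact h (Set.ext fun x => ⟨h'.1 x, h'.2 x⟩)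
    · obtain ⟨⟨t, rfl⟩, hx⟩ := hx
      refine det_eq_zero_of_row_eq_zero t fun j => ?_
      exact one_apply_ne fun h' => hx ⟨j, h'.symm⟩
    · obtain ⟨⟨j, rfl⟩, hx⟩ := hx
      refine det_eq_zero_of_column_eq_zero j fun t => ?_
      exact one_apply_ne fun h' => hx ⟨t, h'⟩

end Minors

lemma Nat.sub_one_le_mul_iff {n c r : ℕ} (hn : 2 ≤ n) (hc : 0 < c) :
    n - 1 ≤ r * c ↔ (n - 2) / c + 1 ≤ r := by
  rw [Nat.add_one_le_iff, Nat.div_lt_iff_lt_mul hc]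
  omega

end General

namespace BidiagonalWord

open Matrix Function Set

variable {n : ℕ}

inductive Factor (n : ℕ) where
  | lower (i : ℕ) (q : ℝ)
  | upper (i : ℕ) (q : ℝ)
  | diag (d : Fin n → ℝ)

namespace Factor

def mat : Factor n → Matrix (Fin n) (Fin n) ℝ
  | lower i q => Lmat n i q
  | upper i q => (Lmat n i q)ᵀ
  | diag d => diagonal d

def Pos : Factor n → Prop
  | lower i q | upper i q => 0 < q ∧ 2 ≤ i ∧ i ≤ n
  | diag d => ∀ x, 0 < d x

def transpose : Factor n → Factor n
  | lower i q => upper i q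
  | upper i q => lower i q
  | diag d => diag d

lemma mat_transpose (a : Factor n) : a.transpose.mat = a.matᵀ := by
  cases a <;> simp [transpose, mat]

lemma Pos.transpose {a : Factor n} (h : a.Pos) : a.transpose.Pos := by
  cases a <;> exact h

end Factor

def wordMat (w : List (Factor n)) : Matrix (Fin n) (Fin n) ℝ := (w.map Factor.mat).prod

def wordTranspose (w : List (Factor n)) : List (Factor n) := (w.map Factor.transpose).reverse

@[simp] lemma wordMat_nil : wordMat ([] : List (Factor n)) = 1 := rfl

@[simp] lemma wordMat_cons (a : Factor n) (w : List (Factor n)) :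
    wordMat (a :: w) = a.mat * wordMat w := List.prod_cons

@[simp] lemma wordMat_append (w₁ w₂ : List (Factor n)) :
    wordMat (w₁ ++ w₂) = wordMat w₁ * wordMat w₂ := by
  simp [wordMat]

lemma wordMat_flatten (l : List (List (Factor n))) :
    wordMat l.flatten = (l.map wordMat).prod := by
  induction l with
  | nil => rfl
  | cons w l ih => simp [ih]

lemma wordMat_wordTranspose (w : List (Factor n)) :
    wordMat (wordTranspose w) = (wordMat w)ᵀ := by
  induction w with
  | nil => simp [wordTranspose]
  | cons a w ih =>
    rw [wordTranspose, List.map_cons, List.reverse_cons, ← wordTranspose, wordMat_append, ih]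
    simp [wordMat, Factor.mat_transpose]

lemma wordTranspose_append (w₁ w₂ : List (Factor n)) :
    wordTranspose (w₁ ++ w₂) = wordTranspose w₂ ++ wordTranspose w₁ := by
  simp [wordTranspose]

lemma Lmat_eq_one_add_single {i : ℕ} (q : ℝ) {x y : Fin n} (hx : (x : ℕ) + 1 = i)
    (hy : (y : ℕ) + 2 = i) : Lmat n i q = 1 + single x y q := by
  ext a b
  have h : ((a : ℕ) + 1 = i ∧ (b : ℕ) + 2 = i) ↔ (x = a ∧ y = b) := by
    simp only [Fin.ext_iff]; omega
  simp [Lmat, single, h]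

lemma Lmat_mul {i : ℕ} (q : ℝ) {x y : Fin n} (hx : (x : ℕ) + 1 = i) (hy : (y : ℕ) + 2 = i)
    (B : Matrix (Fin n) (Fin n) ℝ) : Lmat n i q * B = B.updateRow x (B x + q • B y) := by
  rw [Lmat_eq_one_add_single q hx hy, one_add_single_mul]

lemma Lmat_transpose_mul {i : ℕ} (q : ℝ) {x y : Fin n} (hx : (x : ℕ) + 1 = i)
    (hy : (y : ℕ) + 2 = i) (B : Matrix (Fin n) (Fin n) ℝ) :
    (Lmat n i q)ᵀ * B = B.updateRow y (B y + q • B x) := by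
  rw [Lmat_eq_one_add_single q hx hy, transpose_add, transpose_one, transpose_single,
    one_add_single_mul]

def Exchange (x y : Fin n) (S S' : Set (Fin n)) : Prop :=
  x ∈ S ∧ y ∉ S ∧ S' = insert y (S \ {x})

namespace Factor

-- `Lmat n i` acts on the rows `i - 1` and `i - 2` of `Fin n`.
def Move : Factor n → Set (Fin n) → Set (Fin n) → Prop
  | lower i _, S, S' => ∃ x y : Fin n, (x : ℕ) + 1 = i ∧ (y : ℕ) + 2 = i ∧ Exchange x y S S'
  | upper i _, S, S' => ∃ x y : Fin n, (x : ℕ) + 1 = i ∧ (y : ℕ) + 2 = i ∧ Exchange y x S S'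
  | diag _, _, _ => False

lemma Move.unique {a : Factor n} {S S₁ S₂ : Set (Fin n)} (h₁ : a.Move S S₁) (h₂ : a.Move S S₂) :
    S₁ = S₂ := by
  cases a with
  | lower i q | upper i q =>
    obtain ⟨x, y, hx, hy, -, -, rfl⟩ := h₁
    obtain ⟨x', y', hx', hy', -, -, rfl⟩ := h₂
    obtain rfl : x = x' := Fin.ext (by omega)
    obtain rfl : y = y' := Fin.ext (by omega)
    rfl
  | diag d => exact h₁.elim

end Factor

-- The path condition of Lindström's lemma for the planar network of the word `w`.
def Reach : List (Factor n) → Set (Fin n) → Set (Fin n) → Prop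
  | [], S, T => S = T
  | a :: w, S, T => Reach w S T ∨ ∃ S', a.Move S S' ∧ Reach w S' T

namespace Reach

lemma refl : ∀ (w : List (Factor n)) (S : Set (Fin n)), Reach w S S
  | [], _ => rfl
  | _ :: w, S => Or.inl (refl w S)

lemma append {w₁ w₂ : List (Factor n)} {S M T : Set (Fin n)} (h₁ : Reach w₁ S M)
    (h₂ : Reach w₂ M T) : Reach (w₁ ++ w₂) S T := by
  induction w₁ generalizing S with
  | nil => exact (show S = M from h₁) ▸ h₂
  | cons a w ih =>
    rcases h₁ with h | ⟨S', hS', h⟩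
    exacts [Or.inl (ih h), Or.inr ⟨S', hS', ih h⟩]

lemma insert_sdiff_self (w : List (Factor n)) {S : Set (Fin n)} {a : Fin n} (ha : a ∈ S) :
    Reach w S (insert a (S \ {a})) := by
  rw [insert_sdiff_self_of_mem ha]
  exact refl w S

lemma of_append {w₁ w₂ : List (Factor n)} {S T : Set (Fin n)} (h : Reach (w₁ ++ w₂) S T) :
    ∃ M, Reach w₁ S M ∧ Reach w₂ M T := by
  induction w₁ generalizing S with
  | nil => exact ⟨S, rfl, h⟩
  | cons a w ih =>
    rcases h with h | ⟨S', hS', h⟩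
    · obtain ⟨M, h₁, h₂⟩ := ih h
      exact ⟨M, Or.inl h₁, h₂⟩
    · obtain ⟨M, h₁, h₂⟩ := ih h
      exact ⟨M, Or.inr ⟨S', hS', h₁⟩, h₂⟩

end Reach

lemma strictMono_update_of_adjacent {k : ℕ} {r : Fin k → Fin n} (hr : StrictMono r) {t : Fin k}
    {y : Fin n} (hy : y ∉ range r) (hadj : (r t : ℕ) = y + 1 ∨ (y : ℕ) = r t + 1) :
    StrictMono (update r t y) := by
  have hne : ∀ t', (r t' : ℕ) ≠ y := fun t' h => hy ⟨t', Fin.ext h⟩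
  refine hr.update (fun t' h => ?_) (fun t' h => ?_)
  · have := hr h; have := hne t'; rw [Fin.lt_def] at *; omega
  · have := hr h; have := hne t'; rw [Fin.lt_def] at *; omega

section RowOperation

variable (B : Matrix (Fin n) (Fin n) ℝ) {k : ℕ} {r : Fin k → Fin n} (c : Fin k → Fin n)
  {x y : Fin n} (q : ℝ)

lemma det_submatrix_updateRow_add_cases (hr : StrictMono r)
    (hadj : (x : ℕ) = y + 1 ∨ (y : ℕ) = x + 1) :
    ((∀ S', ¬ Exchange x y (range r) S') ∧
      det ((B.updateRow x (B x + q • B y)).submatrix r c) = det (B.submatrix r c)) ∨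
    (∃ r', StrictMono r' ∧ Exchange x y (range r) (range r') ∧
      det ((B.updateRow x (B x + q • B y)).submatrix r c)
        = det (B.submatrix r c) + q * det (B.submatrix r' c)) := by
  by_cases hmove : x ∈ range r ∧ y ∉ range r
  · obtain ⟨⟨t, rfl⟩, hy⟩ := hmove
    refine Or.inr ⟨update r t y, strictMono_update_of_adjacent hr hy hadj,
      ⟨⟨t, rfl⟩, hy, range_update_of_injective hr.injective t y⟩, ?_⟩
    exact det_submatrix_updateRow_add_self B c q hr.injective t
  · refine Or.inl ⟨fun S' h => hmove ⟨h.1, h.2.1⟩, ?_⟩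
    refine det_submatrix_updateRow_add_of_mem_range B c q hr.injective ?_ ?_
    · rintro rfl; omega
    · intro hx; by_contra hy; exact hmove ⟨hx, hy⟩

end RowOperation

lemma exists_rows_of_index {i : ℕ} (hi : 2 ≤ i) (hin : i ≤ n) :
    ∃ x y : Fin n, (x : ℕ) + 1 = i ∧ (y : ℕ) + 2 = i :=
  ⟨⟨i - 1, by omega⟩, ⟨i - 2, by omega⟩, by simp only; omega, by simp only; omega⟩

section FactorMinors

variable (B : Matrix (Fin n) (Fin n) ℝ) {k : ℕ} {r : Fin k → Fin n} (hr : StrictMono r)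
  (c : Fin k → Fin n)

include hr in
lemma Factor.det_mul_submatrix_cases_of_rowOp {a : Factor n} {x y : Fin n} {q : ℝ}
    (hq : 0 < q) (hadj : (x : ℕ) = y + 1 ∨ (y : ℕ) = x + 1)
    (hmove : ∀ S S', a.Move S S' ↔ Exchange x y S S')
    (hmat : a.mat * B = B.updateRow x (B x + q • B y)) :
    ((∀ S', ¬ a.Move (range r) S') ∧
      ∃ γ > 0, det ((a.mat * B).submatrix r c) = γ * det (B.submatrix r c)) ∨
    (∃ r', StrictMono r' ∧ a.Move (range r) (range r') ∧
      ∃ q > 0, det ((a.mat * B).submatrix r c)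
        = det (B.submatrix r c) + q * det (B.submatrix r' c)) := by
  simp only [hmove, hmat]
  rcases det_submatrix_updateRow_add_cases B c q hr hadj with ⟨hno, h⟩ | ⟨r', hr', hex, h⟩
  · exact Or.inl ⟨hno, 1, one_pos, by rw [h, one_mul]⟩
  · exact Or.inr ⟨r', hr', hex, q, hq, h⟩

include hr in
lemma Factor.det_mul_submatrix_cases {a : Factor n} (ha : a.Pos) :
    ((∀ S', ¬ a.Move (range r) S') ∧
      ∃ γ > 0, det ((a.mat * B).submatrix r c) = γ * det (B.submatrix r c)) ∨
    (∃ r', StrictMono r' ∧ a.Move (range r) (range r') ∧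
      ∃ q > 0, det ((a.mat * B).submatrix r c)
        = det (B.submatrix r c) + q * det (B.submatrix r' c)) := by
  cases a with
  | diag d =>
    exact Or.inl ⟨fun _ h => h, _, Finset.prod_pos fun t _ => ha (r t),
      det_submatrix_diagonal_mul d B r c⟩
  | lower i q =>
    obtain ⟨hq, hi, hin⟩ := ha
    obtain ⟨x, y, hx, hy⟩ := exists_rows_of_index hi hin
    refine Factor.det_mul_submatrix_cases_of_rowOp B hr c hq (Or.inl (by omega))
      (fun S S' => ⟨?_, fun h => ⟨x, y, hx, hy, h⟩⟩) (Lmat_mul q hx hy B)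
    rintro ⟨x', y', hx', hy', h⟩
    obtain rfl : x' = x := Fin.ext (by omega)
    obtain rfl : y' = y := Fin.ext (by omega)
    exact h
  | upper i q =>
    obtain ⟨hq, hi, hin⟩ := ha
    obtain ⟨x, y, hx, hy⟩ := exists_rows_of_index hi hin
    refine Factor.det_mul_submatrix_cases_of_rowOp B hr c hq (Or.inr (by omega))
      (fun S S' => ⟨?_, fun h => ⟨x, y, hx, hy, h⟩⟩) (Lmat_transpose_mul q hx hy B)
    rintro ⟨x', y', hx', hy', h⟩
    obtain rfl : x' = x := Fin.ext (by omega)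
    obtain rfl : y' = y := Fin.ext (by omega)
    exact h

end FactorMinors

theorem det_submatrix_wordMat {w : List (Factor n)} (hw : ∀ a ∈ w, a.Pos) {k : ℕ}
    {r c : Fin k → Fin n} (hr : StrictMono r) (hc : StrictMono c) :
    0 ≤ det ((wordMat w).submatrix r c) ∧
      (0 < det ((wordMat w).submatrix r c) ↔ Reach w (range r) (range c)) := by
  induction w generalizing r with
  | nil =>
    rw [wordMat_nil, det_one_submatrix hr hc]
    split_ifs with h <;> simp [Reach, h]
  | cons a w ih =>
    have hw' : ∀ b ∈ w, b.Pos := fun b hb => hw b (List.mem_cons_of_mem a hb)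
    obtain ⟨h₀, hiff⟩ := ih hw' hr
    rw [wordMat_cons]
    rcases Factor.det_mul_submatrix_cases (wordMat w) hr c (hw a List.mem_cons_self) with
      ⟨hno, γ, hγ, h⟩ | ⟨r', hr', hmove, q, hq, h⟩
    · rw [h, mul_pos_iff_of_pos_left hγ, hiff]
      refine ⟨mul_nonneg hγ.le h₀, ?_⟩
      simp only [Reach, hno, false_and, exists_false, or_false]
    · obtain ⟨h₀', hiff'⟩ := ih hw' hr'
      rw [h]
      refine ⟨by positivity, ?_⟩
      have hReach : Reach (a :: w) (range r) (range c) ↔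
          Reach w (range r) (range c) ∨ Reach w (range r') (range c) :=
        or_congr_right ⟨fun ⟨S', hS', h'⟩ => hmove.unique hS' ▸ h', fun h' => ⟨_, hmove, h'⟩⟩
      rw [hReach, ← hiff, ← hiff']
      constructor
      · intro hpos
        by_contra! hle
        nlinarith [hle.1.antisymm h₀, hle.2.antisymm h₀']
      · rintro (hpos | hpos) <;> positivity

theorem totallyNonneg_wordMat {w : List (Factor n)} (hw : ∀ a ∈ w, a.Pos) :
    TotallyNonneg (wordMat w) :=
  fun _ _ _ hr hc => (det_submatrix_wordMat hw hr hc).1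

theorem totallyPos_wordMat_iff {w : List (Factor n)} (hw : ∀ a ∈ w, a.Pos) :
    TotallyPos (wordMat w) ↔ ∀ (k : ℕ) (r c : Fin k → Fin n), StrictMono r → StrictMono c →
      Reach w (range r) (range c) :=
  forall₄_congr fun _ _ _ hr => forall_congr' fun hc => det_submatrix_wordMat hw hr hc |>.2

def sweep (n m cnt : ℕ) (v : ℕ → ℝ) : List (Factor n) :=
  (List.range cnt).map fun j => .lower (m - j) (v j)

def lowerWord (n : ℕ) (ℓ : ℕ → ℕ → ℝ) (c : ℕ) : List (Factor n) :=
  ((List.range c).map fun t => sweep n n (n - (t + 2) + 1) (ℓ t)).flatten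

def roundWord (n : ℕ) (ℓ : ℕ → ℕ → ℝ) (c : ℕ) (d : Fin n → ℝ) : List (Factor n) :=
  lowerWord n ℓ c ++ Factor.diag d :: wordTranspose (lowerWord n ℓ c)

def powerWord (n : ℕ) (ℓ : ℕ → ℕ → ℝ) (c : ℕ) (d : Fin n → ℝ) (r : ℕ) : List (Factor n) :=
  (List.replicate r (roundWord n ℓ c d)).flatten

lemma sweep_succ (m cnt : ℕ) (v : ℕ → ℝ) :
    sweep n m (cnt + 1) v = .lower m (v 0) :: sweep n (m - 1) cnt (fun j => v (j + 1)) := by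
  simp only [sweep, List.range_succ_eq_map, List.map_cons, List.map_map, Nat.sub_zero]
  congr 1
  refine List.map_congr_left fun j _ => ?_
  simp only [Function.comp_apply, Nat.sub_sub, Nat.add_comm 1 j, Nat.succ_eq_add_one]

lemma wordTranspose_sweep_succ (m cnt : ℕ) (v : ℕ → ℝ) :
    wordTranspose (sweep n m (cnt + 1) v)
      = .upper (m - cnt) (v cnt) :: wordTranspose (sweep n m cnt v) := by
  simp [sweep, wordTranspose, List.range_succ, Factor.transpose]

lemma lowerWord_succ (ℓ : ℕ → ℕ → ℝ) (c : ℕ) :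
    lowerWord n ℓ (c + 1) = lowerWord n ℓ c ++ sweep n n (n - (c + 2) + 1) (ℓ c) := by
  simp [lowerWord, List.range_succ]

lemma wordMat_sweep (i : ℕ) (v : ℕ → ℝ) : wordMat (sweep n n (n - i + 1) v) = Wmat n i v := by
  rw [Wmat, wordMat, sweep, List.map_map]
  congr 1
  exact List.ext_getElem (by simp) fun j _ _ => by
    simp only [List.getElem_map, List.getElem_range, List.getElem_ofFn, Function.comp_apply,
      Factor.mat]

lemma wordMat_lowerWord (ℓ : ℕ → ℕ → ℝ) (c : ℕ) :
    wordMat (lowerWord n ℓ c)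
      = (List.ofFn fun t : Fin c => Wmat n (t.val + 2) (ℓ t.val)).prod := by
  rw [lowerWord, wordMat_flatten, List.map_map]
  congr 1
  exact List.ext_getElem (by simp) fun j _ _ => by simp [wordMat_sweep]

lemma wordMat_roundWord (ℓ : ℕ → ℕ → ℝ) (c : ℕ) (d : Fin n → ℝ) :
    wordMat (roundWord n ℓ c d)
      = wordMat (lowerWord n ℓ c) * diagonal d * (wordMat (lowerWord n ℓ c))ᵀ := by
  rw [roundWord, wordMat_append, wordMat_cons, wordMat_wordTranspose, Matrix.mul_assoc]
  rfl

lemma wordMat_powerWord (ℓ : ℕ → ℕ → ℝ) (c : ℕ) (d : Fin n → ℝ) (r : ℕ) :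
    wordMat (powerWord n ℓ c d r) = wordMat (roundWord n ℓ c d) ^ r := by
  rw [powerWord, wordMat_flatten, List.map_replicate, List.prod_replicate]

section Positivity

variable {ℓ : ℕ → ℕ → ℝ} {c : ℕ} (hcn : c + 1 ≤ n)
  (hℓ : ∀ t, t < c → ∀ j, j ≤ n - (t + 2) → 0 < ℓ t j)

include hcn hℓ

lemma pos_of_mem_lowerWord : ∀ a ∈ lowerWord n ℓ c, a.Pos := by
  intro a ha
  simp only [lowerWord, sweep, List.mem_flatten, List.mem_map, List.mem_range,
    exists_exists_and_eq_and, Order.lt_add_one_iff] at ha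
  obtain ⟨t, ht, j, hj, rfl⟩ := ha
  exact ⟨hℓ t ht j (by omega), by omega, by omega⟩

lemma pos_of_mem_powerWord {d : Fin n → ℝ} (hd : ∀ x, 0 < d x) (r : ℕ) :
    ∀ a ∈ powerWord n ℓ c d r, a.Pos := by
  have hL := pos_of_mem_lowerWord hcn hℓ
  intro a ha
  simp only [powerWord, roundWord, wordTranspose, List.mem_flatten, List.mem_replicate, ne_eq,
    existsAndEq, and_true, List.mem_append, List.mem_cons, List.mem_reverse, List.mem_map] at ha
  obtain ⟨-, ha | rfl | ⟨b, hb, rfl⟩⟩ := ha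
  exacts [hL a ha, hd, (hL b hb).transpose]

end Positivity

section Slides

variable {b : Fin n}

lemma reach_sweep_slide (cnt : ℕ) : ∀ {m : ℕ} (v : ℕ → ℝ) {S : Set (Fin n)} {a : Fin n},
    (b : ℕ) ≤ a → (a : ℕ) + 1 ≤ m → m ≤ cnt + b + 1 → a ∈ S →
    (∀ y : Fin n, (b : ℕ) ≤ y → (y : ℕ) < a → y ∉ S) →
    Reach (sweep n m cnt v) S (insert b (S \ {a})) := by
  induction cnt with
  | zero =>
    intro m v S a hba ham hm ha _
    obtain rfl : a = b := Fin.ext (by omega)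
    exact Reach.insert_sdiff_self _ ha
  | succ cnt ih =>
    intro m v S a hba ham hm ha hfree
    rcases hba.eq_or_lt with hab | hab
    · obtain rfl : a = b := Fin.ext hab.symm
      exact Reach.insert_sdiff_self _ ha
    rw [sweep_succ]
    by_cases hfire : (a : ℕ) + 1 = m
    · set y : Fin n := ⟨a - 1, by omega⟩
      have hyv : (y : ℕ) + 1 = a := by simp only [y]; omega
      have hy : y ∉ S := hfree y (by omega) (by omega)
      refine Or.inr ⟨insert y (S \ {a}), ⟨a, y, hfire, by omega, ha, hy, rfl⟩, ?_⟩
      have hy' : y ∉ S \ {a} := fun h => hy h.1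
      have := ih (m := m - 1) (fun j => v (j + 1)) (S := insert y (S \ {a})) (a := y)
        (by omega) (by omega) (by omega) (mem_insert _ _) fun z hbz hzy hz => ?_
      · rwa [insert_sdiff_self_of_notMem hy'] at this
      · rcases hz with rfl | hz
        · exact lt_irrefl _ hzy
        · exact hfree z hbz (by omega) hz.1
    · exact Or.inl (ih _ hba (by omega) (by omega) ha hfree)

lemma reach_wordTranspose_sweep_slide (m cnt : ℕ) (v : ℕ → ℝ) : ∀ {S : Set (Fin n)} {a : Fin n},
    (a : ℕ) ≤ b → m - cnt + 1 ≤ a + 2 → (b : ℕ) + 1 ≤ m → a ∈ S →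
    (∀ y : Fin n, (a : ℕ) < y → (y : ℕ) ≤ b → y ∉ S) →
    Reach (wordTranspose (sweep n m cnt v)) S (insert b (S \ {a})) := by
  induction cnt with
  | zero =>
    intro S a hab ham hbm ha _
    obtain rfl : a = b := Fin.ext (by omega)
    exact Reach.insert_sdiff_self _ ha
  | succ cnt ih =>
    intro S a hab ham hbm ha hfree
    rcases hab.eq_or_lt with hab | hab
    · obtain rfl : a = b := Fin.ext hab
      exact Reach.insert_sdiff_self _ ha
    rw [wordTranspose_sweep_succ]
    by_cases hfire : m - cnt = a + 2
    · set x : Fin n := ⟨a + 1, by omega⟩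
      have hxv : (x : ℕ) = a + 1 := rfl
      have hx : x ∉ S := hfree x (by omega) (by omega)
      refine Or.inr ⟨insert x (S \ {a}), ⟨x, a, by omega, by omega, ha, hx, rfl⟩, ?_⟩
      have hx' : x ∉ S \ {a} := fun h => hx h.1
      have := ih (S := insert x (S \ {a})) (a := x) (by omega) (by omega) hbm (mem_insert _ _)
        fun z hxz hzb hz => ?_
      · rwa [insert_sdiff_self_of_notMem hx'] at this
      · rcases hz with rfl | hz
        · exact lt_irrefl _ hxz
        · exact hfree z (by omega) hzb hz.1
    · exact Or.inl (ih hab.le (by omega) hbm ha hfree)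

end Slides

section Movers

variable {k : ℕ} (e f : Fin k → Fin n)

def downMovers : Finset (Fin k) := Finset.univ.filter fun t => f t < e t

def upMovers : Finset (Fin k) := Finset.univ.filter fun t => e t < f t

variable {e f}

@[simp] lemma mem_downMovers {t : Fin k} : t ∈ downMovers e f ↔ f t < e t := by
  simp [downMovers]

@[simp] lemma mem_upMovers {t : Fin k} : t ∈ upMovers e f ↔ e t < f t := by
  simp [upMovers]

lemma downMovers_update_self (t : Fin k) :
    downMovers (update e t (f t)) f = (downMovers e f).erase t := by
  ext t'
  by_cases h : t' = t
  · subst h; simp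
  · simp [h]

lemma upMovers_update_self (t : Fin k) :
    upMovers (update e t (f t)) f = (upMovers e f).erase t := by
  ext t'
  by_cases h : t' = t
  · subst h; simp
  · simp [h]

lemma eq_of_downMovers_eq_empty (hd : downMovers e f = ∅) (hu : upMovers e f = ∅) : e = f := by
  funext t
  have h₁ : t ∉ downMovers e f := hd ▸ Finset.notMem_empty t
  have h₂ : t ∉ upMovers e f := hu ▸ Finset.notMem_empty t
  simp only [mem_downMovers, mem_upMovers, not_lt] at h₁ h₂
  exact le_antisymm h₁ h₂

lemma card_downMovers_le (hf : Injective f) : (downMovers e f).card ≤ n - 1 := by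
  simpa using Finset.card_le_card_of_injOn (fun t => (f t : ℕ)) (t := Finset.range (n - 1))
    (fun t ht => by
      have := mem_downMovers.mp ht
      have := (e t).isLt
      rw [Fin.lt_def] at *
      simp only [Finset.coe_range, Set.mem_Iio]
      omega)
    (fun t _ t' _ h => hf (Fin.ext h))

lemma card_upMovers_le (he : Injective e) : (upMovers e f).card ≤ n - 1 := by
  simpa using Finset.card_le_card_of_injOn (fun t => (e t : ℕ)) (t := Finset.range (n - 1))
    (fun t ht => by
      have := mem_upMovers.mp ht
      have := (f t).isLt
      rw [Fin.lt_def] at *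
      simp only [Finset.coe_range, Set.mem_Iio]
      omega)
    (fun t _ t' _ h => he (Fin.ext h))

end Movers

section Schedule

variable {k : ℕ} {e f : Fin k → Fin n} (he : StrictMono e) (hf : StrictMono f)
include he hf

-- Moving the lowest row that must go down keeps the rows in order and finds its way free;
-- symmetrically for the highest row that must go up.
lemma reach_sweep_update_of_min_downMover {t : Fin k} (ht : t ∈ downMovers e f)
    (hmin : ∀ t' ∈ downMovers e f, t ≤ t') {m cnt : ℕ} (v : ℕ → ℝ) (hm : (e t : ℕ) + 1 ≤ m)
    (hcnt : m ≤ cnt + f t + 1) :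
    StrictMono (update e t (f t)) ∧
      Reach (sweep n m cnt v) (range e) (range (update e t (f t))) := by
  have hft := mem_downMovers.mp ht
  have hbelow : ∀ t' < t, e t' < f t := fun t' h' => by
    have : t' ∉ downMovers e f := fun h => absurd (hmin t' h) (not_le.mpr h')
    rw [mem_downMovers, not_lt] at this
    exact this.trans_lt (hf h')
  refine ⟨he.update hbelow fun t' h' => hft.trans (he h'), ?_⟩
  rw [range_update_of_injective he.injective]
  refine reach_sweep_slide cnt v (Fin.le_def.mp hft.le) hm hcnt ⟨t, rfl⟩ ?_
  rintro _ hy₁ hy₂ ⟨t', rfl⟩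
  exact absurd (hbelow t' (he.lt_iff_lt.mp (Fin.lt_def.mpr hy₂))) (not_lt.mpr (Fin.le_def.mpr hy₁))

lemma reach_wordTranspose_sweep_update_of_max_upMover {t : Fin k} (ht : t ∈ upMovers e f)
    (hmax : ∀ t' ∈ upMovers e f, t' ≤ t) {m cnt : ℕ} (v : ℕ → ℝ) (hm : m - cnt + 1 ≤ e t + 2)
    (hfm : (f t : ℕ) + 1 ≤ m) :
    StrictMono (update e t (f t)) ∧
      Reach (wordTranspose (sweep n m cnt v)) (range e) (range (update e t (f t))) := by
  have hft := mem_upMovers.mp ht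
  have habove : ∀ t', t < t' → f t < e t' := fun t' h' => by
    have : t' ∉ upMovers e f := fun h => absurd (hmax t' h) (not_le.mpr h')
    rw [mem_upMovers, not_lt] at this
    exact (hf h').trans_le this
  refine ⟨he.update (fun t' h' => (he h').trans hft) habove, ?_⟩
  rw [range_update_of_injective he.injective]
  refine reach_wordTranspose_sweep_slide m cnt v (Fin.le_def.mp hft.le) hm hfm ⟨t, rfl⟩ ?_
  rintro _ hy₁ hy₂ ⟨t', rfl⟩
  exact absurd (habove t' (he.lt_iff_lt.mp (Fin.lt_def.mpr hy₁))) (not_lt.mpr (Fin.le_def.mpr hy₂))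

-- The sweep `W_{c+2}` reaches down only to row `c`, hence the last conjunct.
lemma exists_reach_lowerWord (ℓ : ℕ → ℕ → ℝ) {c : ℕ} (hc : c + 1 ≤ n) :
    ∃ e', StrictMono e' ∧ Reach (lowerWord n ℓ c) (range e) (range e') ∧
      (downMovers e' f).card ≤ (downMovers e f).card - c ∧
      (upMovers e' f).card ≤ (upMovers e f).card ∧ ∀ t ∈ downMovers e' f, c ≤ (t : ℕ) := by
  induction c with
  | zero => exact ⟨e, he, Reach.refl _ _, by omega, le_rfl, fun _ _ => Nat.zero_le _⟩
  | succ c ih =>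
    obtain ⟨e₁, he₁, hR, hD, hU, hlow⟩ := ih (by omega)
    rw [lowerWord_succ]
    obtain hne | hemp := (downMovers e₁ f).eq_empty_or_nonempty
    · exact ⟨e₁, he₁, hR.append (Reach.refl _ _), by simp [hne], hU, by simp [hne]⟩
    set t := (downMovers e₁ f).min' hemp
    have ht : t ∈ downMovers e₁ f := Finset.min'_mem _ _
    have hct := hlow t ht
    obtain ⟨hmono, hR'⟩ := reach_sweep_update_of_min_downMover he₁ hf ht
      (fun t' h => Finset.min'_le _ _ h) (ℓ c) (m := n) (cnt := n - (c + 2) + 1)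
      (by have := (e₁ t).isLt; omega) (by have := Fin.val_le_of_strictMono hf t; omega)
    refine ⟨_, hmono, hR.append hR', ?_, ?_, fun t' ht' => ?_⟩
    · rw [downMovers_update_self, Finset.card_erase_of_mem ht]; omega
    · rw [upMovers_update_self]; exact Finset.card_erase_le.trans hU
    · rw [downMovers_update_self, Finset.mem_erase] at ht'
      have : t < t' := lt_of_le_of_ne (Finset.min'_le _ _ ht'.2) (Ne.symm ht'.1)
      rw [Fin.lt_def] at this
      omega

omit he in
lemma exists_reach_wordTranspose_lowerWord (ℓ : ℕ → ℕ → ℝ) {c : ℕ} (hc : c + 1 ≤ n)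
    {e : Fin k → Fin n} (he : StrictMono e) :
    ∃ e', StrictMono e' ∧ Reach (wordTranspose (lowerWord n ℓ c)) (range e) (range e') ∧
      (upMovers e' f).card ≤ (upMovers e f).card - c ∧
      (downMovers e' f).card ≤ (downMovers e f).card := by
  induction c generalizing e with
  | zero => exact ⟨e, he, Reach.refl _ _, by omega, le_rfl⟩
  | succ c ih =>
    rw [lowerWord_succ, wordTranspose_append]
    by_cases hbig : c + 1 ≤ (upMovers e f).card
    · have hne : (upMovers e f).Nonempty := Finset.card_pos.mp (by omega)
      set t := (upMovers e f).max' hne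
      have ht : t ∈ upMovers e f := Finset.max'_mem _ _
      have htc : (upMovers e f).card ≤ t + 1 := by
        simpa using Finset.card_le_card (t := Finset.Iic t) fun t' h =>
          Finset.mem_Iic.mpr (Finset.le_max' _ t' h)
      obtain ⟨hmono, hR⟩ := reach_wordTranspose_sweep_update_of_max_upMover he hf ht
        (fun t' h => Finset.le_max' _ t' h) (ℓ c) (m := n) (cnt := n - (c + 2) + 1)
        (by have := Fin.val_le_of_strictMono he t; omega) (by have := (f t).isLt; omega)
      obtain ⟨e', he', hR', hU, hD⟩ := ih (by omega) hmono
      refine ⟨e', he', hR.append hR', ?_, ?_⟩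
      · rw [upMovers_update_self, Finset.card_erase_of_mem ht] at hU; omega
      · rw [downMovers_update_self] at hD; exact hD.trans Finset.card_erase_le
    · obtain ⟨e', he', hR', hU, hD⟩ := ih (by omega) he
      exact ⟨e', he', (Reach.refl _ _).append hR', by omega, hD⟩

omit he in
lemma exists_reach_powerWord (ℓ : ℕ → ℕ → ℝ) (d : Fin n → ℝ) {c : ℕ} (hc : c + 1 ≤ n)
    (r : ℕ) {e : Fin k → Fin n} (he : StrictMono e) :
    ∃ e', StrictMono e' ∧ Reach (powerWord n ℓ c d r) (range e) (range e') ∧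
      (downMovers e' f).card ≤ (downMovers e f).card - r * c ∧
      (upMovers e' f).card ≤ (upMovers e f).card - r * c := by
  induction r generalizing e with
  | zero => exact ⟨e, he, Reach.refl _ _, by omega, by omega⟩
  | succ r ih =>
    obtain ⟨e₁, he₁, hR₁, hD₁, hU₁, -⟩ := exists_reach_lowerWord he hf ℓ hc
    obtain ⟨e₂, he₂, hR₂, hU₂, hD₂⟩ := exists_reach_wordTranspose_lowerWord hf ℓ hc he₁
    obtain ⟨e', he', hR', hD', hU'⟩ := ih he₂
    have hround : Reach (roundWord n ℓ c d) (range e) (range e₂) := hR₁.append (Or.inl hR₂)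
    refine ⟨e', he', ?_, ?_, ?_⟩
    · rw [powerWord, List.replicate_succ, List.flatten_cons]
      exact hround.append hR'
    · rw [Nat.succ_mul]; omega
    · rw [Nat.succ_mul]; omega

theorem reach_powerWord (ℓ : ℕ → ℕ → ℝ) (d : Fin n → ℝ) {c r : ℕ} (hc : c + 1 ≤ n)
    (hr : n - 1 ≤ r * c) : Reach (powerWord n ℓ c d r) (range e) (range f) := by
  obtain ⟨e', -, hR, hD, hU⟩ := exists_reach_powerWord hf ℓ d hc r he
  have := card_downMovers_le (e := e) hf.injective
  have := card_upMovers_le (f := f) he.injective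
  rwa [eq_of_downMovers_eq_empty (e := e') (f := f) (Finset.card_eq_zero.mp (by omega))
    (Finset.card_eq_zero.mp (by omega))] at hR

end Schedule

section Gap

lemma Exchange.compl_singleton {x y g : Fin n} {S' : Set (Fin n)} (h : Exchange x y {g}ᶜ S') :
    y = g ∧ S' = {x}ᶜ := by
  obtain ⟨hx, hy, rfl⟩ := h
  rw [mem_compl_singleton_iff] at hx
  rw [mem_compl_singleton_iff, not_not] at hy
  subst hy
  refine ⟨rfl, Set.ext fun z => ?_⟩
  by_cases hz : z = y
  · subst hz; simp [Ne.symm hx]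
  · simp [hz]

lemma reach_sweep_compl_singleton (cnt : ℕ) : ∀ {m : ℕ} (v : ℕ → ℝ) {g : Fin n} {T : Set (Fin n)},
    Reach (sweep n m cnt v) {g}ᶜ T →
    ∃ g' : Fin n, T = {g'}ᶜ ∧ (g' = g ∨ (g' : ℕ) = g + 1 ∧ (g : ℕ) + 2 ≤ m) := by
  induction cnt with
  | zero => exact fun _ _ _ h => ⟨_, h.symm, Or.inl rfl⟩
  | succ cnt ih =>
    intro m v g T h
    rw [sweep_succ] at h
    rcases h with h | ⟨S', ⟨x, y, hx, hy, hex⟩, h⟩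
    · obtain ⟨g', rfl, hg'⟩ := ih _ h
      exact ⟨g', rfl, hg'.imp_right fun h => ⟨h.1, by omega⟩⟩
    · obtain ⟨rfl, rfl⟩ := hex.compl_singleton
      obtain ⟨g', rfl, rfl | hg'⟩ := ih _ h
      · exact ⟨_, rfl, Or.inr ⟨by omega, by omega⟩⟩
      · omega

lemma mem_lowerWord {ℓ : ℕ → ℕ → ℝ} {c : ℕ} {a : Factor n} (ha : a ∈ lowerWord n ℓ c) :
    ∃ i q, a = .lower i q := by
  simp only [lowerWord, sweep, List.mem_flatten, List.mem_map, List.mem_range,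
    exists_exists_and_eq_and] at ha
  obtain ⟨t, -, j, -, rfl⟩ := ha
  exact ⟨_, _, rfl⟩

lemma reach_compl_singleton_of_forall_ne_lower {w : List (Factor n)}
    (hw : ∀ a ∈ w, ∀ i q, a ≠ .lower i q) {g : Fin n} {T : Set (Fin n)}
    (h : Reach w {g}ᶜ T) : ∃ g' ≤ g, T = {g'}ᶜ := by
  induction w generalizing g with
  | nil => exact ⟨g, le_rfl, (show {g}ᶜ = T from h).symm⟩
  | cons a w ih =>
    have hw' : ∀ b ∈ w, ∀ i q, b ≠ .lower i q := fun b hb => hw b (List.mem_cons_of_mem a hb)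
    rcases h with h | ⟨S', hmove, h⟩
    · exact ih hw' h
    cases a with
    | lower i q => exact absurd rfl (hw _ List.mem_cons_self i q)
    | diag d => exact hmove.elim
    | upper i q =>
      obtain ⟨x, y, hx, hy, hex⟩ := hmove
      obtain ⟨rfl, rfl⟩ := hex.compl_singleton
      obtain ⟨g', hg', rfl⟩ := ih hw' h
      exact ⟨g', hg'.trans (Fin.le_def.mpr (by omega)), rfl⟩

lemma reach_lowerWord_compl_singleton (ℓ : ℕ → ℕ → ℝ) (c : ℕ) {g : Fin n} {T : Set (Fin n)}
    (h : Reach (lowerWord n ℓ c) {g}ᶜ T) : ∃ g' : Fin n, T = {g'}ᶜ ∧ (g' : ℕ) ≤ g + c := by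
  induction c generalizing T with
  | zero => exact ⟨g, (show {g}ᶜ = T from h).symm, by omega⟩
  | succ c ih =>
    rw [lowerWord_succ] at h
    obtain ⟨M, h₁, h₂⟩ := h.of_append
    obtain ⟨g₁, rfl, hg₁⟩ := ih h₁
    obtain ⟨g', rfl, rfl | hg'⟩ := reach_sweep_compl_singleton _ _ h₂
    exacts [⟨_, rfl, by omega⟩, ⟨g', rfl, by omega⟩]

lemma reach_powerWord_compl_singleton (ℓ : ℕ → ℕ → ℝ) (d : Fin n → ℝ) (c r : ℕ) {g : Fin n}
    {T : Set (Fin n)} (h : Reach (powerWord n ℓ c d r) {g}ᶜ T) :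
    ∃ g' : Fin n, T = {g'}ᶜ ∧ (g' : ℕ) ≤ g + r * c := by
  induction r generalizing g with
  | zero => exact ⟨g, (show {g}ᶜ = T from h).symm, by omega⟩
  | succ r ih =>
    rw [powerWord, List.replicate_succ, List.flatten_cons, roundWord, List.append_assoc] at h
    obtain ⟨M, h₁, h₂⟩ := h.of_append
    obtain ⟨M', h₂, h₃⟩ := h₂.of_append
    obtain ⟨g₁, rfl, hg₁⟩ := reach_lowerWord_compl_singleton ℓ c h₁
    have hup : ∀ a ∈ Factor.diag d :: wordTranspose (lowerWord n ℓ c), ∀ i q, a ≠ .lower i q := by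
      simp only [List.mem_cons, wordTranspose, List.mem_reverse, List.mem_map]
      rintro _ (rfl | ⟨b, hb, rfl⟩) i q
      · simp
      · obtain ⟨i', q', rfl⟩ := mem_lowerWord hb
        simp [Factor.transpose]
    obtain ⟨g₂, hg₂, rfl⟩ := reach_compl_singleton_of_forall_ne_lower hup h₂
    obtain ⟨g', rfl, hg'⟩ := ih h₃
    refine ⟨g', rfl, ?_⟩
    rw [Fin.le_def] at hg₂
    rw [Nat.succ_mul]
    omega

end Gap

theorem totallyPos_wordMat_powerWord_iff {ℓ : ℕ → ℕ → ℝ} {c : ℕ} (hcn : c + 1 ≤ n)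
    (hℓ : ∀ t, t < c → ∀ j, j ≤ n - (t + 2) → 0 < ℓ t j) {d : Fin n → ℝ} (hd : ∀ x, 0 < d x)
    (r : ℕ) : TotallyPos (wordMat (powerWord n ℓ c d r)) ↔ n - 1 ≤ r * c := by
  rw [totallyPos_wordMat_iff (pos_of_mem_powerWord hcn hℓ hd r)]
  refine ⟨fun h => ?_, fun hr k e f he hf => reach_powerWord he hf ℓ d hcn hr⟩
  obtain ⟨m, rfl⟩ : ∃ m, n = m + 1 := ⟨n - 1, by omega⟩
  have hlast : range (Fin.castSucc : Fin m → Fin (m + 1)) = {Fin.last m}ᶜ := by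
    ext i
    simp [Fin.ext_iff, Fin.val_last, Nat.lt_iff_le_and_ne, Fin.is_le]
  have hR := h m Fin.succ Fin.castSucc Fin.strictMono_succ Fin.strictMono_castSucc
  rw [Fin.range_succ, hlast] at hR
  obtain ⟨g', hg', hle⟩ := reach_powerWord_compl_singleton ℓ d c r hR
  rw [compl_inj_iff, Set.singleton_eq_singleton_iff] at hg'
  simp only [← hg', Fin.val_last, Fin.val_zero] at hle
  omega

end BidiagonalWord

open BidiagonalWord in
/-- For L = W_2(ℓ^2)⋯W_s(ℓ^s) with all multipliers positive and a positive diagonal D,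
the matrix A = L·D·Lᵀ is oscillatory with exponent ⌈(n−1)/(s−1)⌉ (here written as
(n−2)/(s−1) + 1 in natural-number arithmetic). -/
theorem stmt18 {n s : ℕ} (hn : 2 ≤ n) (hs : 2 ≤ s) (hsn : s ≤ n)
    (ℓ : ℕ → ℕ → ℝ) (hℓ : ∀ t, t < s - 1 → ∀ j, j ≤ n - (t + 2) → 0 < ℓ t j)
    (dd : Fin n → ℝ) (hdd : ∀ i, 0 < dd i)
    (L A : Matrix (Fin n) (Fin n) ℝ)
    (hL : L = (List.ofFn fun t : Fin (s - 1) => Wmat n (t.val + 2) (ℓ t.val)).prod)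
    (hA : A = L * Matrix.diagonal dd * L.transpose) :
    TotallyNonneg A ∧ (∃ k : ℕ, 0 < k ∧ TotallyPos (A ^ k)) ∧
    IsLeast {r : ℕ | 0 < r ∧ TotallyPos (A ^ r)} ((n - 2) / (s - 1) + 1) := by
  have hcn : s - 1 + 1 ≤ n := by omega
  have hpow : ∀ r, A ^ r = wordMat (powerWord n ℓ (s - 1) dd r) := fun r => by
    rw [wordMat_powerWord, wordMat_roundWord, wordMat_lowerWord, ← hL, hA]
  have htp : ∀ r, TotallyPos (A ^ r) ↔ (n - 2) / (s - 1) + 1 ≤ r := fun r => by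
    rw [hpow, totallyPos_wordMat_powerWord_iff hcn hℓ hdd, Nat.sub_one_le_mul_iff hn (by omega)]
  have htn : TotallyNonneg A := by
    simpa only [← hpow, pow_one] using totallyNonneg_wordMat (pos_of_mem_powerWord hcn hℓ hdd 1)
  exact ⟨htn, ⟨_, Nat.succ_pos _, (htp _).2 le_rfl⟩, ⟨Nat.succ_pos _, (htp _).2 le_rfl⟩,
    fun r hr => (htp r).1 hr.2⟩
end
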